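/- arXiv:1705.05671 — 3 statements merged into one kernel-verified Lean document; each statement's English description precedes it below -/
import Mathlib

section
/- Suppose that X is a c-quasiconvex metric space, that G ⊊ X is a domain, and that γ is a (ν,h)-solid arc in G with endpoints x, y such that min{δ_G(x), δ_G(y)} = r ≥ 3c|x−y|. Then there is a constant μ₁ = μ₁(c,ν) (one may take μ₁ = 6c(e^{2ν} − 1)) such that diam(γ) ≤ max{ μ₁|x−y|, 2r(e^h − 1) }. -/
open Set Metric ENNReal Filter

noncomputable section

variable {X : Type*} {Y : Type*} [MetricSpace X] [MetricSpace Y]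

/-- The distance from a point `z` to the boundary (complement) of `G`;
for an open proper subset this is the distance to `∂G`. -/
def bdist (G : Set X) (z : X) : ℝ := Metric.infDist z Gᶜ

/-- A domain: a connected (hence nonempty) open set. -/
def IsDomainSet (G : Set X) : Prop := IsOpen G ∧ IsConnected G

/-- A proper domain `G ⊊ X`. -/
def IsProperDomain (G : Set X) : Prop := IsOpen G ∧ IsConnected G ∧ G ≠ Set.univ

/-- A curve (parametrized on `[0,1]`) with image in `G`. -/
def IsCurveIn (G : Set X) (γ : ℝ → X) : Prop :=
  ContinuousOn γ (Set.Icc 0 1) ∧ Set.MapsTo γ (Set.Icc 0 1) G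

/-- A set `A` is `c`-quasiconvex: each pair of points of `A` can be joined inside `A`
by a curve of length at most `c` times the distance between the points. -/
def IsCQuasiconvex (A : Set X) (c : ℝ) : Prop :=
  ∀ x ∈ A, ∀ y ∈ A, ∃ γ : ℝ → X, ContinuousOn γ (Set.Icc 0 1) ∧
    Set.MapsTo γ (Set.Icc 0 1) A ∧ γ 0 = x ∧ γ 1 = y ∧
    eVariationOn γ (Set.Icc 0 1) ≤ ENNReal.ofReal (c * dist x y)

/-- A rectifiably connected metric space. -/
def IsRectifiablyConnectedSpace (X : Type*) [MetricSpace X] : Prop :=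
  ∀ x y : X, ∃ γ : ℝ → X, ContinuousOn γ (Set.Icc 0 1) ∧ γ 0 = x ∧ γ 1 = y ∧
    eVariationOn γ (Set.Icc 0 1) < ⊤

/-- The quasihyperbolic length `∫_γ |dz|/δ_G(z)` of the part of the curve `γ`
corresponding to the parameter set `s`, defined as the supremum of lower
Riemann–Stieltjes sums. -/
def qhLength (G : Set X) (γ : ℝ → X) (s : Set ℝ) : ℝ≥0∞ :=
  ⨆ p : ℕ × { u : ℕ → ℝ // Monotone u ∧ ∀ i, u i ∈ s },
    ∑ i ∈ Finset.range p.1,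
      edist (γ (p.2.1 (i + 1))) (γ (p.2.1 i)) /
        ENNReal.ofReal (⨆ t ∈ Set.Icc (p.2.1 i) (p.2.1 (i + 1)), bdist G (γ t))

/-- The quasihyperbolic distance in `G`: the infimum of quasihyperbolic lengths of
curves joining `x` to `y` in `G`. -/
def qhDist (G : Set X) (x y : X) : ℝ≥0∞ :=
  ⨅ γ ∈ {γ : ℝ → X | IsCurveIn G γ ∧ γ 0 = x ∧ γ 1 = y}, qhLength G γ (Set.Icc 0 1)

/-- The `h`-coarse quasihyperbolic length of the part of `γ` over the parameter set `s`:
the supremum of `∑ k_G(x_{j-1}, x_j)` over all `h`-coarse sequences of successive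
points of `γ` (and `0` if there is no such sequence). -/
def coarseQHLength (G : Set X) (γ : ℝ → X) (s : Set ℝ) (h : ℝ) : ℝ≥0∞ :=
  ⨆ p : { q : ℕ × (ℕ → ℝ) // 1 ≤ q.1 ∧ Monotone q.2 ∧ (∀ i, q.2 i ∈ s) ∧
      ∀ i < q.1, ENNReal.ofReal h ≤ qhDist G (γ (q.2 i)) (γ (q.2 (i + 1))) },
    ∑ i ∈ Finset.range p.1.1, qhDist G (γ (p.1.2 i)) (γ (p.1.2 (i + 1)))

/-- An `ε`-short arc in `G`: an arc whose quasihyperbolic length is at most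
`k_G` of its endpoints plus `ε`. -/
def IsShortArcIn (G : Set X) (γ : ℝ → X) (ε : ℝ) : Prop :=
  IsCurveIn G γ ∧ Set.InjOn γ (Set.Icc 0 1) ∧
    qhLength G γ (Set.Icc 0 1) ≤ qhDist G (γ 0) (γ 1) + ENNReal.ofReal ε

/-- A `(ν,h)`-solid arc in `G`. -/
def IsSolidArcIn (G : Set X) (γ : ℝ → X) (ν h : ℝ) : Prop :=
  IsCurveIn G γ ∧ Set.InjOn γ (Set.Icc 0 1) ∧
    ∀ a b : ℝ, a ∈ Set.Icc (0:ℝ) 1 → b ∈ Set.Icc (0:ℝ) 1 → a ≤ b →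
      coarseQHLength G γ (Set.Icc a b) h ≤ ENNReal.ofReal ν * qhDist G (γ a) (γ b)

/-- A `b`-uniform domain: every pair of points can be joined by a double `b`-cone arc. -/
def IsUniformDomain (G : Set X) (b : ℝ) : Prop :=
  ∀ x ∈ G, ∀ y ∈ G, ∃ γ : ℝ → X, IsCurveIn G γ ∧ γ 0 = x ∧ γ 1 = y ∧
    (∀ t ∈ Set.Icc (0:ℝ) 1,
      min (eVariationOn γ (Set.Icc 0 t)) (eVariationOn γ (Set.Icc t 1)) ≤
        ENNReal.ofReal (b * bdist G (γ t))) ∧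
    eVariationOn γ (Set.Icc 0 1) ≤ ENNReal.ofReal (b * dist x y)

/-- The inner (length) distance `λ_G(x,y)` in `G`. -/
def innerDist (G : Set X) (x y : X) : ℝ≥0∞ :=
  ⨅ γ ∈ {γ : ℝ → X | IsCurveIn G γ ∧ γ 0 = x ∧ γ 1 = y},
    eVariationOn γ (Set.Icc 0 1)

/-- An inner `b`-uniform domain: as a uniform domain, but with the length of the
connecting arc bounded by `b` times the inner distance of the endpoints. -/
def IsInnerUniformDomain (G : Set X) (b : ℝ) : Prop :=
  ∀ x ∈ G, ∀ y ∈ G, ∃ γ : ℝ → X, IsCurveIn G γ ∧ γ 0 = x ∧ γ 1 = y ∧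
    (∀ t ∈ Set.Icc (0:ℝ) 1,
      min (eVariationOn γ (Set.Icc 0 t)) (eVariationOn γ (Set.Icc t 1)) ≤
        ENNReal.ofReal (b * bdist G (γ t))) ∧
    eVariationOn γ (Set.Icc 0 1) ≤ ENNReal.ofReal b * innerDist G x y

/-- An `a`-John domain with center `y₀`. -/
def IsJohnDomain (G : Set X) (a : ℝ) (y₀ : X) : Prop :=
  ∀ x ∈ G, ∃ γ : ℝ → X, IsCurveIn G γ ∧ γ 0 = x ∧ γ 1 = y₀ ∧
    eVariationOn γ (Set.Icc 0 1) < ⊤ ∧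
    ∀ t ∈ Set.Icc (0:ℝ) 1,
      min (eVariationOn γ (Set.Icc 0 t)) (eVariationOn γ (Set.Icc t 1)) ≤
        ENNReal.ofReal (a * bdist G (γ t))

/-- `f` is weakly `H`-quasisymmetric on `G`. -/
def WeaklyQSOn (f : X → Y) (G : Set X) (H : ℝ) : Prop :=
  ∀ x ∈ G, ∀ a ∈ G, ∀ b ∈ G,
    dist x a ≤ dist x b → dist (f x) (f a) ≤ H * dist (f x) (f b)

/-- `f : G → G'` is a homeomorphism with inverse `g`. -/
def IsHomeoOn (f : X → Y) (g : Y → X) (G : Set X) (G' : Set Y) : Prop :=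
  ContinuousOn f G ∧ ContinuousOn g G' ∧ Set.MapsTo f G G' ∧ Set.MapsTo g G' G ∧
    (∀ x ∈ G, g (f x) = x) ∧ (∀ y ∈ G', f (g y) = y)

/-- `f : G → G'` is `C`-coarsely `M`-quasihyperbolic. -/
def IsCQHOn (f : X → Y) (G : Set X) (G' : Set Y) (M C : ℝ) : Prop :=
  ∀ x ∈ G, ∀ y ∈ G,
    qhDist G x y ≤ ENNReal.ofReal M * qhDist G' (f x) (f y) + ENNReal.ofReal C ∧
    qhDist G' (f x) (f y) ≤ ENNReal.ofReal M * qhDist G x y + ENNReal.ofReal C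

end
universe u v



section AuxSolid

open Set Metric ENNReal Filter

variable {X : Type*} [MetricSpace X]

theorem aux_bdist_pos {G : Set X} (hGo : IsOpen G) (hne : Gᶜ.Nonempty) {x : X} (hx : x ∈ G) :
    0 < bdist G x := by
  rw [bdist]
  exact (IsClosed.notMem_iff_infDist_pos hGo.isClosed_compl hne).1 (by simpa using hx)

theorem aux_mem_of_dist_lt {G : Set X} {x z : X} (h : dist x z < bdist G x) : z ∈ G := by
  rw [bdist] at h
  by_contra hz
  have hz' : z ∈ Gᶜ := hz
  exact absurd (Metric.infDist_le_dist_of_mem hz') (not_le.2 h)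

theorem aux_bdist_lip {G : Set X} (a b : X) : bdist G a ≤ bdist G b + dist a b := by
  rw [bdist, bdist]
  exact Metric.infDist_le_infDist_add_dist

theorem aux_supIcc_le {f : ℝ → ℝ} {p q M : ℝ} (hM : 0 ≤ M) (hf : ∀ t ∈ Icc p q, f t ≤ M) :
    (⨆ t ∈ Icc p q, f t) ≤ M :=
  Real.iSup_le (fun t => Real.iSup_le (fun ht => hf t ht) hM) hM

theorem aux_le_supIcc {f : ℝ → ℝ} {p q M t₀ : ℝ} (hf : ∀ t ∈ Icc p q, f t ≤ M)
    (ht₀ : t₀ ∈ Icc p q) : f t₀ ≤ ⨆ t ∈ Icc p q, f t := by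
  have hbdd : BddAbove (Set.range fun t => ⨆ _ : t ∈ Icc p q, f t) := by
    refine ⟨max M 0, ?_⟩
    rintro v ⟨t, rfl⟩
    show (⨆ _ : t ∈ Icc p q, f t) ≤ max M 0
    by_cases ht : t ∈ Icc p q
    · haveI : Nonempty (t ∈ Icc p q) := ⟨ht⟩
      rw [ciSup_const]
      exact le_max_of_le_left (hf t ht)
    · haveI : IsEmpty (t ∈ Icc p q) := ⟨ht⟩
      rw [Real.iSup_of_isEmpty]
      exact le_max_right _ _
  have h1 : f t₀ = ⨆ _ : t₀ ∈ Icc p q, f t₀ := by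
    haveI : Nonempty (t₀ ∈ Icc p q) := ⟨ht₀⟩
    exact ciSup_const.symm
  rw [h1]
  exact le_ciSup hbdd t₀

theorem aux_log_le {a d : ℝ} (ha : 0 < a) (hd : 0 ≤ d) :
    Real.log (a + d) - Real.log a ≤ d / a := by
  have had : 0 < a + d := by linarith
  have h1 : Real.log ((a + d) / a) ≤ (a + d) / a - 1 :=
    Real.log_le_sub_one_of_pos (by positivity)
  rw [Real.log_div had.ne' ha.ne'] at h1
  have h2 : (a + d) / a - 1 = d / a := by field_simp; ring
  linarith

theorem aux_exp_sub_one_le {k : ℝ} (hk : 0 ≤ k) : Real.exp k - 1 ≤ k * Real.exp k := by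
  have h := Real.add_one_le_exp (-k)
  have hp : 0 < Real.exp k := Real.exp_pos k
  rw [Real.exp_neg] at h
  have h3 := mul_le_mul_of_nonneg_right h hp.le
  rw [inv_mul_cancel₀ hp.ne'] at h3
  nlinarith

theorem aux_qhLength_le {G : Set X} {σ : ℝ → X} {m M : ℝ} (hm : 0 < m)
    (hlow : ∀ t ∈ Icc (0:ℝ) 1, m ≤ bdist G (σ t))
    (hupp : ∀ t ∈ Icc (0:ℝ) 1, bdist G (σ t) ≤ M) :
    qhLength G σ (Icc 0 1) ≤ eVariationOn σ (Icc 0 1) / ENNReal.ofReal m := by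
  rw [qhLength]
  refine iSup_le ?_
  rintro ⟨n, u, hu, hmem⟩
  simp only
  have key : ∀ i ∈ Finset.range n,
      edist (σ (u (i+1))) (σ (u i)) /
          ENNReal.ofReal (⨆ t ∈ Icc (u i) (u (i+1)), bdist G (σ t))
        ≤ edist (σ (u (i+1))) (σ (u i)) / ENNReal.ofReal m := by
    intro i _
    refine ENNReal.div_le_div le_rfl (ENNReal.ofReal_le_ofReal ?_)
    have hsub : Icc (u i) (u (i+1)) ⊆ Icc (0:ℝ) 1 := fun t ht =>
      ⟨le_trans (hmem i).1 ht.1, le_trans ht.2 (hmem (i+1)).2⟩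
    have h2 : bdist G (σ (u i)) ≤ ⨆ t ∈ Icc (u i) (u (i+1)), bdist G (σ t) :=
      aux_le_supIcc (fun t ht => hupp t (hsub ht)) ⟨le_rfl, hu (Nat.le_succ i)⟩
    exact le_trans (hlow (u i) (hmem i)) h2
  calc ∑ i ∈ Finset.range n, edist (σ (u (i+1))) (σ (u i)) /
          ENNReal.ofReal (⨆ t ∈ Icc (u i) (u (i+1)), bdist G (σ t))
      ≤ ∑ i ∈ Finset.range n, edist (σ (u (i+1))) (σ (u i)) / ENNReal.ofReal m :=
        Finset.sum_le_sum key
    _ = (∑ i ∈ Finset.range n, edist (σ (u (i+1))) (σ (u i))) / ENNReal.ofReal m := by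
        simp only [div_eq_mul_inv, ← Finset.sum_mul]
    _ ≤ eVariationOn σ (Icc 0 1) / ENNReal.ofReal m :=
        ENNReal.div_le_div (eVariationOn.sum_le (f := σ) (n := n) hu hmem) le_rfl

theorem aux_le_qhLength_start {G : Set X} (hGo : IsOpen G) (hne : Gᶜ.Nonempty) {σ : ℝ → X}
    (hc : ContinuousOn σ (Icc 0 1)) (hmap : MapsTo σ (Icc 0 1) G) :
    ENNReal.ofReal (Real.log (1 + dist (σ 0) (σ 1) / bdist G (σ 0))) ≤
      qhLength G σ (Icc 0 1) := by
  have h01 : (0:ℝ) ∈ Icc (0:ℝ) 1 := ⟨le_rfl, zero_le_one⟩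
  have h11 : (1:ℝ) ∈ Icc (0:ℝ) 1 := ⟨zero_le_one, le_rfl⟩
  set δ := bdist G (σ 0) with hδdef
  have hδ : 0 < δ := aux_bdist_pos hGo hne (hmap h01)
  set D := dist (σ 0) (σ 1) with hDdef
  have hD : 0 ≤ D := dist_nonneg
  have main : ∀ ε : ℝ, 0 < ε →
      ENNReal.ofReal (Real.log (δ + D + ε) - Real.log (δ + ε)) ≤ qhLength G σ (Icc 0 1) := by
    intro ε hε
    obtain ⟨δ', hδ', hunif⟩ := Metric.uniformContinuousOn_iff.1
      ((isCompact_Icc).uniformContinuousOn_of_continuous hc) ε hε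
    obtain ⟨n₀, hn₀⟩ := exists_nat_one_div_lt hδ'
    set N := n₀ + 1 with hN
    have hNpos : 0 < (N:ℝ) := by positivity
    set u : ℕ → ℝ := fun i => min ((i:ℝ) / N) 1 with hu_def
    have hu_mono : Monotone u := by
      intro a b hab
      exact min_le_min (by gcongr <;> exact_mod_cast hab) le_rfl
    have hu_mem : ∀ i, u i ∈ Icc (0:ℝ) 1 := fun i =>
      ⟨le_min (by positivity) zero_le_one, min_le_right _ _⟩
    have hu0 : u 0 = 0 := by simp [hu_def]
    have huN : u N = 1 := by
      simp [hu_def, div_self hNpos.ne']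
    have hu_eq : ∀ i ≤ N, u i = (i:ℝ)/N := by
      intro i hi
      have hle : (i:ℝ)/N ≤ 1 := by
        rw [div_le_one hNpos]; exact_mod_cast hi
      simp [hu_def, min_eq_left hle]
    set d : ℕ → ℝ := fun i => dist (σ (u i)) (σ (u (i+1))) with hd_def
    set s : ℕ → ℝ := fun i => ∑ j ∈ Finset.range i, d j with hs_def
    have hs_nonneg : ∀ i, 0 ≤ s i := fun i => Finset.sum_nonneg (fun j _ => dist_nonneg)
    set A : ℕ → ℝ := fun i => δ + s i + ε with hA_def
    have hA_pos : ∀ i, 0 < A i := by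
      intro i
      have := hs_nonneg i
      simp only [hA_def]
      linarith
    have hdist0 : ∀ i, dist (σ (u 0)) (σ (u i)) ≤ s i := fun i =>
      dist_le_range_sum_dist (fun j => σ (u j)) i
    have hsup_le : ∀ i < N, (⨆ t ∈ Icc (u i) (u (i+1)), bdist G (σ t)) ≤ A i := by
      intro i hiN
      refine aux_supIcc_le (hA_pos i).le ?_
      intro t ht
      have htmem : t ∈ Icc (0:ℝ) 1 :=
        ⟨le_trans (hu_mem i).1 ht.1, le_trans ht.2 (hu_mem (i+1)).2⟩
      have h1 : bdist G (σ t) ≤ bdist G (σ (u i)) + dist (σ t) (σ (u i)) :=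
        aux_bdist_lip _ _
      have h2 : bdist G (σ (u i)) ≤ δ + s i := by
        have hlip : bdist G (σ (u i)) ≤ bdist G (σ (u 0)) + dist (σ (u i)) (σ (u 0)) :=
          aux_bdist_lip _ _
        have h3 := hdist0 i
        rw [hu0] at hlip h3
        rw [dist_comm] at hlip
        rw [← hδdef] at hlip
        linarith
      have hstep : u (i+1) - u i = 1/N := by
        rw [hu_eq (i+1) hiN, hu_eq i hiN.le]
        push_cast
        ring
      have h3 : dist (σ t) (σ (u i)) < ε := by
        apply hunif t htmem (u i) (hu_mem i)
        rw [Real.dist_eq, abs_of_nonneg (by linarith [ht.1] : (0:ℝ) ≤ t - u i)]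
        have ht2 : t ≤ u (i+1) := ht.2
        have hfrac : 1/(N:ℝ) = 1/((n₀:ℝ)+1) := by rw [hN]; push_cast; ring
        calc t - u i ≤ u (i+1) - u i := by linarith
          _ = 1/N := hstep
          _ = 1/((n₀:ℝ)+1) := hfrac
          _ < δ' := hn₀
      have : bdist G (σ t) ≤ δ + s i + ε := by linarith
      simpa [hA_def] using this
    have hterm : ∀ i ∈ Finset.range N,
        ENNReal.ofReal (Real.log (A (i+1)) - Real.log (A i)) ≤
          edist (σ (u (i+1))) (σ (u i)) /
            ENNReal.ofReal (⨆ t ∈ Icc (u i) (u (i+1)), bdist G (σ t)) := by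
      intro i hi
      rw [Finset.mem_range] at hi
      have hAi := hA_pos i
      have hA1 : A (i+1) = A i + d i := by
        simp only [hA_def, hs_def, Finset.sum_range_succ]
        ring
      have hlog : Real.log (A (i+1)) - Real.log (A i) ≤ d i / A i := by
        rw [hA1]; exact aux_log_le hAi dist_nonneg
      have hS := hsup_le i hi
      calc ENNReal.ofReal (Real.log (A (i+1)) - Real.log (A i))
          ≤ ENNReal.ofReal (d i / A i) := ENNReal.ofReal_le_ofReal hlog
        _ = ENNReal.ofReal (d i) / ENNReal.ofReal (A i) := ENNReal.ofReal_div_of_pos hAi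
        _ ≤ ENNReal.ofReal (d i) /
              ENNReal.ofReal (⨆ t ∈ Icc (u i) (u (i+1)), bdist G (σ t)) :=
            ENNReal.div_le_div le_rfl (ENNReal.ofReal_le_ofReal hS)
        _ = edist (σ (u (i+1))) (σ (u i)) /
              ENNReal.ofReal (⨆ t ∈ Icc (u i) (u (i+1)), bdist G (σ t)) := by
            rw [edist_dist, dist_comm]
    have hsum : ENNReal.ofReal (Real.log (A N) - Real.log (A 0)) ≤
        ∑ i ∈ Finset.range N, edist (σ (u (i+1))) (σ (u i)) /
          ENNReal.ofReal (⨆ t ∈ Icc (u i) (u (i+1)), bdist G (σ t)) := by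
      have h1 : Real.log (A N) - Real.log (A 0) =
          ∑ i ∈ Finset.range N, (Real.log (A (i+1)) - Real.log (A i)) :=
        (Finset.sum_range_sub (fun i => Real.log (A i)) N).symm
      rw [h1, ENNReal.ofReal_sum_of_nonneg (fun i _ => by
        have hA1 : A i ≤ A (i+1) := by
          simp only [hA_def, hs_def, Finset.sum_range_succ]
          have : (0:ℝ) ≤ d i := dist_nonneg
          linarith
        have := Real.log_le_log (hA_pos i) hA1
        linarith)]
      exact Finset.sum_le_sum hterm
    have hfinal : (∑ i ∈ Finset.range N, edist (σ (u (i+1))) (σ (u i)) /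
          ENNReal.ofReal (⨆ t ∈ Icc (u i) (u (i+1)), bdist G (σ t)))
        ≤ qhLength G σ (Icc 0 1) := by
      rw [qhLength]
      exact le_iSup (fun p : ℕ × { v : ℕ → ℝ // Monotone v ∧ ∀ i, v i ∈ Icc (0:ℝ) 1 } =>
        ∑ i ∈ Finset.range p.1, edist (σ (p.2.1 (i+1))) (σ (p.2.1 i)) /
          ENNReal.ofReal (⨆ t ∈ Icc (p.2.1 i) (p.2.1 (i+1)), bdist G (σ t)))
        ⟨N, ⟨u, hu_mono, hu_mem⟩⟩
    refine le_trans ?_ (le_trans hsum hfinal)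
    apply ENNReal.ofReal_le_ofReal
    have hsN : D ≤ s N := by
      have h1 := hdist0 N
      rw [hu0, huN] at h1
      exact h1
    have h2 : Real.log (δ + D + ε) ≤ Real.log (A N) := by
      apply Real.log_le_log (by linarith)
      simp only [hA_def]
      linarith
    have h0 : Real.log (A 0) = Real.log (δ + ε) := by
      simp [hA_def, hs_def]
    linarith
  have hcont : Tendsto (fun ε : ℝ => ENNReal.ofReal (Real.log (δ + D + ε) - Real.log (δ + ε)))
      (nhdsWithin 0 (Ioi 0)) (nhds (ENNReal.ofReal (Real.log (δ + D) - Real.log δ))) := by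
    have c1 : ContinuousAt (fun ε : ℝ => Real.log (δ + D + ε) - Real.log (δ + ε)) 0 := by
      apply ContinuousAt.sub
      · exact ContinuousAt.comp (Real.continuousAt_log (by simp; intro hcontra; linarith))
          (by fun_prop)
      · exact ContinuousAt.comp (Real.continuousAt_log (by simp; intro hcontra; linarith))
          (by fun_prop)
    have c2 := (ENNReal.continuous_ofReal.continuousAt).comp c1
    have c3 := c2.tendsto
    simp only [Function.comp, add_zero] at c3
    exact c3.mono_left nhdsWithin_le_nhds
  have hlim := le_of_tendsto hcont
    (eventually_nhdsWithin_of_forall (fun ε hε => main ε hε))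
  have heq : Real.log (1 + D / δ) = Real.log (δ + D) - Real.log δ := by
    have h1 : 1 + D / δ = (δ + D)/δ := by field_simp
    rw [h1, Real.log_div (by linarith : δ + D ≠ 0) hδ.ne']
  rw [heq]
  exact hlim

theorem aux_le_qhLength_end {G : Set X} (hGo : IsOpen G) (hne : Gᶜ.Nonempty) {σ : ℝ → X}
    (hc : ContinuousOn σ (Icc 0 1)) (hmap : MapsTo σ (Icc 0 1) G) :
    ENNReal.ofReal (Real.log (1 + dist (σ 0) (σ 1) / bdist G (σ 1))) ≤
      qhLength G σ (Icc 0 1) := by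
  have h01 : (0:ℝ) ∈ Icc (0:ℝ) 1 := ⟨le_rfl, zero_le_one⟩
  have h11 : (1:ℝ) ∈ Icc (0:ℝ) 1 := ⟨zero_le_one, le_rfl⟩
  set δ := bdist G (σ 1) with hδdef
  have hδ : 0 < δ := aux_bdist_pos hGo hne (hmap h11)
  set D := dist (σ 0) (σ 1) with hDdef
  have hD : 0 ≤ D := dist_nonneg
  have main : ∀ ε : ℝ, 0 < ε →
      ENNReal.ofReal (Real.log (δ + D + ε) - Real.log (δ + ε)) ≤ qhLength G σ (Icc 0 1) := by
    intro ε hε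
    obtain ⟨δ', hδ', hunif⟩ := Metric.uniformContinuousOn_iff.1
      ((isCompact_Icc).uniformContinuousOn_of_continuous hc) ε hε
    obtain ⟨n₀, hn₀⟩ := exists_nat_one_div_lt hδ'
    set N := n₀ + 1 with hN
    have hNpos : 0 < (N:ℝ) := by positivity
    set u : ℕ → ℝ := fun i => min ((i:ℝ) / N) 1 with hu_def
    have hu_mono : Monotone u := by
      intro a b hab
      exact min_le_min (by gcongr <;> exact_mod_cast hab) le_rfl
    have hu_mem : ∀ i, u i ∈ Icc (0:ℝ) 1 := fun i =>
      ⟨le_min (by positivity) zero_le_one, min_le_right _ _⟩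
    have hu0 : u 0 = 0 := by simp [hu_def]
    have huN : u N = 1 := by
      simp [hu_def, div_self hNpos.ne']
    have hu_eq : ∀ i ≤ N, u i = (i:ℝ)/N := by
      intro i hi
      have hle : (i:ℝ)/N ≤ 1 := by
        rw [div_le_one hNpos]; exact_mod_cast hi
      simp [hu_def, min_eq_left hle]
    set d : ℕ → ℝ := fun i => dist (σ (u i)) (σ (u (i+1))) with hd_def
    set T : ℕ → ℝ := fun i => ∑ j ∈ Finset.Ico i N, d j with hT_def
    have hT_nonneg : ∀ i, 0 ≤ T i := fun i => Finset.sum_nonneg (fun j _ => dist_nonneg)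
    have hT_succ : ∀ i < N, T i = d i + T (i+1) := by
      intro i hiN
      simp only [hT_def]
      exact Finset.sum_eq_sum_Ico_succ_bot hiN d
    have hT_N : T N = 0 := by simp [hT_def]
    set B : ℕ → ℝ := fun i => δ + T (i+1) + ε with hB_def
    have hB_pos : ∀ i, 0 < B i := by
      intro i
      have := hT_nonneg (i+1)
      simp only [hB_def]
      linarith
    have hdistT : ∀ k ≤ N, dist (σ (u k)) (σ (u N)) ≤ T k := by
      intro k hk
      have h1 := dist_le_range_sum_dist (fun j => σ (u (k + j))) (N - k)
      have h2 : k + (N - k) = N := Nat.add_sub_cancel' hk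
      simp only [Nat.add_zero] at h1
      rw [h2] at h1
      have h3 : T k = ∑ j ∈ Finset.range (N - k), d (k + j) := by
        simp only [hT_def]
        exact Finset.sum_Ico_eq_sum_range d k N
      rw [h3]
      exact h1
    have hsup_le : ∀ i < N, (⨆ t ∈ Icc (u i) (u (i+1)), bdist G (σ t)) ≤ B i := by
      intro i hiN
      refine aux_supIcc_le (hB_pos i).le ?_
      intro t ht
      have htmem : t ∈ Icc (0:ℝ) 1 :=
        ⟨le_trans (hu_mem i).1 ht.1, le_trans ht.2 (hu_mem (i+1)).2⟩
      have h1 : bdist G (σ t) ≤ bdist G (σ (u (i+1))) + dist (σ t) (σ (u (i+1))) :=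
        aux_bdist_lip _ _
      have h2 : bdist G (σ (u (i+1))) ≤ δ + T (i+1) := by
        have hlip : bdist G (σ (u (i+1))) ≤ bdist G (σ (u N)) + dist (σ (u (i+1))) (σ (u N)) :=
          aux_bdist_lip _ _
        have h3 := hdistT (i+1) hiN
        rw [huN] at hlip h3
        rw [← hδdef] at hlip
        linarith
      have hstep : u (i+1) - u i = 1/N := by
        rw [hu_eq (i+1) hiN, hu_eq i hiN.le]
        push_cast
        ring
      have h3 : dist (σ t) (σ (u (i+1))) < ε := by
        apply hunif t htmem (u (i+1)) (hu_mem (i+1))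
        rw [Real.dist_eq, abs_of_nonpos (by linarith [ht.2] : t - u (i+1) ≤ 0)]
        have ht1 : u i ≤ t := ht.1
        have hfrac : 1/(N:ℝ) = 1/((n₀:ℝ)+1) := by rw [hN]; push_cast; ring
        calc -(t - u (i+1)) = u (i+1) - t := by ring
          _ ≤ u (i+1) - u i := by linarith
          _ = 1/N := hstep
          _ = 1/((n₀:ℝ)+1) := hfrac
          _ < δ' := hn₀
      have : bdist G (σ t) ≤ δ + T (i+1) + ε := by linarith
      simpa [hB_def] using this
    have hterm : ∀ i ∈ Finset.range N,
        ENNReal.ofReal (Real.log (δ + T i + ε) - Real.log (δ + T (i+1) + ε)) ≤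
          edist (σ (u (i+1))) (σ (u i)) /
            ENNReal.ofReal (⨆ t ∈ Icc (u i) (u (i+1)), bdist G (σ t)) := by
      intro i hi
      rw [Finset.mem_range] at hi
      have hBi := hB_pos i
      have hB1 : δ + T i + ε = B i + d i := by
        rw [hT_succ i hi]
        simp only [hB_def]
        ring
      have hlog : Real.log (δ + T i + ε) - Real.log (δ + T (i+1) + ε) ≤ d i / B i := by
        rw [hB1]
        have : δ + T (i+1) + ε = B i := by simp only [hB_def]
        rw [this]
        exact aux_log_le hBi dist_nonneg
      have hS := hsup_le i hi
      calc ENNReal.ofReal (Real.log (δ + T i + ε) - Real.log (δ + T (i+1) + ε))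
          ≤ ENNReal.ofReal (d i / B i) := ENNReal.ofReal_le_ofReal hlog
        _ = ENNReal.ofReal (d i) / ENNReal.ofReal (B i) := ENNReal.ofReal_div_of_pos hBi
        _ ≤ ENNReal.ofReal (d i) /
              ENNReal.ofReal (⨆ t ∈ Icc (u i) (u (i+1)), bdist G (σ t)) :=
            ENNReal.div_le_div le_rfl (ENNReal.ofReal_le_ofReal hS)
        _ = edist (σ (u (i+1))) (σ (u i)) /
              ENNReal.ofReal (⨆ t ∈ Icc (u i) (u (i+1)), bdist G (σ t)) := by
            rw [edist_dist, dist_comm]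
    have hsum : ENNReal.ofReal (Real.log (δ + T 0 + ε) - Real.log (δ + T N + ε)) ≤
        ∑ i ∈ Finset.range N, edist (σ (u (i+1))) (σ (u i)) /
          ENNReal.ofReal (⨆ t ∈ Icc (u i) (u (i+1)), bdist G (σ t)) := by
      have h1 : Real.log (δ + T 0 + ε) - Real.log (δ + T N + ε) =
          ∑ i ∈ Finset.range N,
            (Real.log (δ + T i + ε) - Real.log (δ + T (i+1) + ε)) :=
        (Finset.sum_range_sub' (fun i => Real.log (δ + T i + ε)) N).symm
      rw [h1, ENNReal.ofReal_sum_of_nonneg (fun i hi => by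
        rw [Finset.mem_range] at hi
        have hB1 : δ + T (i+1) + ε ≤ δ + T i + ε := by
          rw [hT_succ i hi]
          have : (0:ℝ) ≤ d i := dist_nonneg
          linarith
        have hpos : 0 < δ + T (i+1) + ε := by
          have := hT_nonneg (i+1); linarith
        have := Real.log_le_log hpos hB1
        linarith)]
      exact Finset.sum_le_sum hterm
    have hfinal : (∑ i ∈ Finset.range N, edist (σ (u (i+1))) (σ (u i)) /
          ENNReal.ofReal (⨆ t ∈ Icc (u i) (u (i+1)), bdist G (σ t)))
        ≤ qhLength G σ (Icc 0 1) := by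
      rw [qhLength]
      exact le_iSup (fun p : ℕ × { v : ℕ → ℝ // Monotone v ∧ ∀ i, v i ∈ Icc (0:ℝ) 1 } =>
        ∑ i ∈ Finset.range p.1, edist (σ (p.2.1 (i+1))) (σ (p.2.1 i)) /
          ENNReal.ofReal (⨆ t ∈ Icc (p.2.1 i) (p.2.1 (i+1)), bdist G (σ t)))
        ⟨N, ⟨u, hu_mono, hu_mem⟩⟩
    refine le_trans ?_ (le_trans hsum hfinal)
    apply ENNReal.ofReal_le_ofReal
    have hsN : D ≤ T 0 := by
      have h1 := hdistT 0 (Nat.zero_le N)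
      rw [hu0, huN] at h1
      exact h1
    have h2 : Real.log (δ + D + ε) ≤ Real.log (δ + T 0 + ε) := by
      apply Real.log_le_log (by linarith)
      linarith
    have h0 : Real.log (δ + T N + ε) = Real.log (δ + ε) := by
      rw [hT_N, add_zero]
    linarith
  have hcont : Tendsto (fun ε : ℝ => ENNReal.ofReal (Real.log (δ + D + ε) - Real.log (δ + ε)))
      (nhdsWithin 0 (Ioi 0)) (nhds (ENNReal.ofReal (Real.log (δ + D) - Real.log δ))) := by
    have c1 : ContinuousAt (fun ε : ℝ => Real.log (δ + D + ε) - Real.log (δ + ε)) 0 := by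
      apply ContinuousAt.sub
      · exact ContinuousAt.comp (Real.continuousAt_log (by simp; intro hcontra; linarith))
          (by fun_prop)
      · exact ContinuousAt.comp (Real.continuousAt_log (by simp; intro hcontra; linarith))
          (by fun_prop)
    have c2 := (ENNReal.continuous_ofReal.continuousAt).comp c1
    have c3 := c2.tendsto
    simp only [Function.comp, add_zero] at c3
    exact c3.mono_left nhdsWithin_le_nhds
  have hlim := le_of_tendsto hcont
    (eventually_nhdsWithin_of_forall (fun ε hε => main ε hε))
  have heq : Real.log (1 + D / δ) = Real.log (δ + D) - Real.log δ := by
    have h1 : 1 + D / δ = (δ + D)/δ := by field_simp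
    rw [h1, Real.log_div (by linarith : δ + D ≠ 0) hδ.ne']
  rw [heq]
  exact hlim

theorem aux_log_le_qhDist_left {G : Set X} (hGo : IsOpen G) (hne : Gᶜ.Nonempty) (a b : X) :
    ENNReal.ofReal (Real.log (1 + dist a b / bdist G a)) ≤ qhDist G a b := by
  rw [qhDist]
  refine le_iInf₂ ?_
  intro σ hσ
  obtain ⟨⟨hc, hm⟩, h0, h1⟩ := hσ
  have h2 := aux_le_qhLength_start hGo hne hc hm
  rwa [h0, h1] at h2

theorem aux_log_le_qhDist_right {G : Set X} (hGo : IsOpen G) (hne : Gᶜ.Nonempty) (a b : X) :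
    ENNReal.ofReal (Real.log (1 + dist a b / bdist G b)) ≤ qhDist G a b := by
  rw [qhDist]
  refine le_iInf₂ ?_
  intro σ hσ
  obtain ⟨⟨hc, hm⟩, h0, h1⟩ := hσ
  have h2 := aux_le_qhLength_end hGo hne hc hm
  rwa [h0, h1] at h2

theorem aux_dist_le_left {G : Set X} (hGo : IsOpen G) (hne : Gᶜ.Nonempty) {a b : X}
    (ha : a ∈ G) {k : ℝ} (hk : 0 ≤ k) (hq : qhDist G a b ≤ ENNReal.ofReal k) :
    dist a b ≤ bdist G a * (Real.exp k - 1) := by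
  have hδ := aux_bdist_pos hGo hne ha
  have hlog := le_trans (aux_log_le_qhDist_left hGo hne a b) hq
  have hlogk : Real.log (1 + dist a b / bdist G a) ≤ k :=
    (ENNReal.ofReal_le_ofReal_iff hk).1 hlog
  have hdnn : 0 ≤ dist a b / bdist G a := div_nonneg dist_nonneg hδ.le
  have hpos : 0 < 1 + dist a b / bdist G a := by linarith
  have hexp := Real.exp_le_exp.2 hlogk
  rw [Real.exp_log hpos] at hexp
  have h2 : dist a b / bdist G a ≤ Real.exp k - 1 := by linarith
  calc dist a b = dist a b / bdist G a * bdist G a := by field_simp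
    _ ≤ (Real.exp k - 1) * bdist G a := mul_le_mul_of_nonneg_right h2 hδ.le
    _ = bdist G a * (Real.exp k - 1) := mul_comm _ _

theorem aux_dist_le_right {G : Set X} (hGo : IsOpen G) (hne : Gᶜ.Nonempty) {a b : X}
    (hb : b ∈ G) {k : ℝ} (hk : 0 ≤ k) (hq : qhDist G a b ≤ ENNReal.ofReal k) :
    dist a b ≤ bdist G b * (Real.exp k - 1) := by
  have hδ := aux_bdist_pos hGo hne hb
  have hlog := le_trans (aux_log_le_qhDist_right hGo hne a b) hq
  have hlogk : Real.log (1 + dist a b / bdist G b) ≤ k :=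
    (ENNReal.ofReal_le_ofReal_iff hk).1 hlog
  have hdnn : 0 ≤ dist a b / bdist G b := div_nonneg dist_nonneg hδ.le
  have hpos : 0 < 1 + dist a b / bdist G b := by linarith
  have hexp := Real.exp_le_exp.2 hlogk
  rw [Real.exp_log hpos] at hexp
  have h2 : dist a b / bdist G b ≤ Real.exp k - 1 := by linarith
  calc dist a b = dist a b / bdist G b * bdist G b := by field_simp
    _ ≤ (Real.exp k - 1) * bdist G b := mul_le_mul_of_nonneg_right h2 hδ.le
    _ = bdist G b * (Real.exp k - 1) := mul_comm _ _

end AuxSolid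

set_option maxHeartbeats 2000000 in
/-- diameter bound for solid arcs with endpoints deep inside the domain,
with the explicit constant `μ₁ = 6c(e^{2ν} - 1)`. -/
theorem diam_solid_arc_le {X : Type u} [MetricSpace X] (c ν h r : ℝ)
    (hc : 1 ≤ c) (hν : 1 ≤ ν) (hh : 0 ≤ h)
    (hX : IsCQuasiconvex (Set.univ : Set X) c)
    (G : Set X) (hG : IsProperDomain G)
    (γ : ℝ → X) (hγ : IsSolidArcIn G γ ν h)
    (hr : min (bdist G (γ 0)) (bdist G (γ 1)) = r)
    (hr3 : 3 * c * dist (γ 0) (γ 1) ≤ r) :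
    EMetric.diam (γ '' Set.Icc 0 1) ≤
      ENNReal.ofReal (max (6 * c * (Real.exp (2 * ν) - 1) * dist (γ 0) (γ 1))
        (2 * r * (Real.exp h - 1))) := by
  obtain ⟨hGo, hGconn, hGne⟩ := hG
  obtain ⟨⟨hγc, hγG⟩, hγinj, hsolid⟩ := hγ
  have hne : Gᶜ.Nonempty := Set.nonempty_compl.2 hGne
  have h01 : (0:ℝ) ∈ Set.Icc (0:ℝ) 1 := ⟨le_rfl, zero_le_one⟩
  have h11 : (1:ℝ) ∈ Set.Icc (0:ℝ) 1 := ⟨zero_le_one, le_rfl⟩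
  have hxG : γ 0 ∈ G := hγG h01
  have hyG : γ 1 ∈ G := hγG h11
  have hδx : 0 < bdist G (γ 0) := aux_bdist_pos hGo hne hxG
  have hδy : 0 < bdist G (γ 1) := aux_bdist_pos hGo hne hyG
  have hrpos : 0 < r := by rw [← hr]; exact lt_min hδx hδy
  have hD0 : 0 ≤ dist (γ 0) (γ 1) := dist_nonneg
  have hc0 : (0:ℝ) ≤ c := by linarith
  have hν0 : (0:ℝ) ≤ ν := by linarith
  have hcD0 : 0 ≤ c * dist (γ 0) (γ 1) := mul_nonneg hc0 hD0
  have hrx : r ≤ bdist G (γ 0) := by rw [← hr]; exact min_le_left _ _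
  have hry : r ≤ bdist G (γ 1) := by rw [← hr]; exact min_le_right _ _
  have hδxr : bdist G (γ 0) ≤ r + dist (γ 0) (γ 1) := by
    rcases le_total (bdist G (γ 0)) (bdist G (γ 1)) with hxy | hxy
    · rw [← hr, min_eq_left hxy]; linarith
    · have h1 := aux_bdist_lip (G := G) (γ 0) (γ 1)
      rw [← hr, min_eq_right hxy]; linarith
  have hδyr : bdist G (γ 1) ≤ r + dist (γ 0) (γ 1) := by
    rcases le_total (bdist G (γ 0)) (bdist G (γ 1)) with hxy | hxy
    · have h1 := aux_bdist_lip (G := G) (γ 1) (γ 0)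
      rw [dist_comm (γ 1) (γ 0)] at h1
      rw [← hr, min_eq_left hxy]; linarith
    · rw [← hr, min_eq_right hxy]; linarith
  -- upper bound on the quasihyperbolic distance of the endpoints
  obtain ⟨σ, hσc, hσmapu, hσ0, hσ1, hσvar⟩ := hX (γ 0) (Set.mem_univ _) (γ 1) (Set.mem_univ _)
  have hσdist : ∀ t ∈ Set.Icc (0:ℝ) 1, dist (γ 0) (σ t) ≤ c * dist (γ 0) (γ 1) := by
    intro t ht
    have h1 : edist (σ 0) (σ t) ≤ eVariationOn σ (Set.Icc 0 1) :=
      eVariationOn.edist_le σ h01 ht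
    have h2 := le_trans h1 hσvar
    rw [hσ0, edist_dist] at h2
    exact (ENNReal.ofReal_le_ofReal_iff hcD0).1 h2
  have hcDr : 3 * (c * dist (γ 0) (γ 1)) ≤ r := by linarith [hr3]
  have hσG : Set.MapsTo σ (Set.Icc 0 1) G := by
    intro t ht
    refine aux_mem_of_dist_lt (x := γ 0) ?_
    calc dist (γ 0) (σ t) ≤ c * dist (γ 0) (γ 1) := hσdist t ht
      _ < bdist G (γ 0) := by linarith
  have hlow : ∀ t ∈ Set.Icc (0:ℝ) 1, r - c * dist (γ 0) (γ 1) ≤ bdist G (σ t) := by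
    intro t ht
    have h1 : bdist G (γ 0) ≤ bdist G (σ t) + dist (γ 0) (σ t) := aux_bdist_lip _ _
    have h2 := hσdist t ht
    linarith
  have hupp : ∀ t ∈ Set.Icc (0:ℝ) 1,
      bdist G (σ t) ≤ bdist G (γ 0) + c * dist (γ 0) (γ 1) := by
    intro t ht
    have h1 : bdist G (σ t) ≤ bdist G (γ 0) + dist (σ t) (γ 0) := aux_bdist_lip _ _
    have h2 := hσdist t ht
    rw [dist_comm (σ t) (γ 0)] at h1
    linarith
  have hm : 0 < r - c * dist (γ 0) (γ 1) := by linarith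
  have hK : qhDist G (γ 0) (γ 1) ≤
      ENNReal.ofReal (3 * c * dist (γ 0) (γ 1) / (2 * r)) := by
    have hq1 : qhDist G (γ 0) (γ 1) ≤ qhLength G σ (Set.Icc 0 1) := by
      rw [qhDist]
      exact iInf₂_le σ ⟨⟨hσc, hσG⟩, hσ0, hσ1⟩
    refine le_trans hq1 (le_trans (aux_qhLength_le hm hlow hupp) ?_)
    have hq3 := ENNReal.div_le_div hσvar
      (le_refl (ENNReal.ofReal (r - c * dist (γ 0) (γ 1))))
    refine le_trans hq3 ?_
    rw [← ENNReal.ofReal_div_of_pos hm]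
    apply ENNReal.ofReal_le_ofReal
    rw [div_le_div_iff₀ hm (by linarith : (0:ℝ) < 2*r)]
    nlinarith [mul_nonneg hcD0 (by linarith : (0:ℝ) ≤ r - 3*(c*dist (γ 0) (γ 1)))]
  have hsolid01 := hsolid 0 1 h01 h11 zero_le_one
  have hchain1 : ∀ s t : ℝ, s ∈ Set.Icc (0:ℝ) 1 → t ∈ Set.Icc (0:ℝ) 1 → s ≤ t →
      ENNReal.ofReal h ≤ qhDist G (γ s) (γ t) →
      qhDist G (γ s) (γ t) ≤ coarseQHLength G γ (Set.Icc 0 1) h := by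
    intro s t hs ht hst hco
    rw [coarseQHLength]
    have humono : Monotone (fun i : ℕ => if i = 0 then s else t) := by
      apply monotone_nat_of_le_succ
      intro n
      cases n with
      | zero => simpa using hst
      | succ n => simp
    have humem : ∀ i : ℕ, (if i = 0 then s else t) ∈ Set.Icc (0:ℝ) 1 := by
      intro i
      by_cases hi : i = 0 <;> simp [hi, hs, ht]
    have hcoarse : ∀ i < 1, ENNReal.ofReal h ≤
        qhDist G (γ (if i = 0 then s else t)) (γ (if i + 1 = 0 then s else t)) := by
      intro i hi
      interval_cases i
      simpa using hco
    refine le_trans ?_ (le_iSup _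
      ⟨(1, fun i : ℕ => if i = 0 then s else t), le_rfl, humono, humem, hcoarse⟩)
    simp
  have hchain2 : ∀ t : ℝ, t ∈ Set.Icc (0:ℝ) 1 →
      ENNReal.ofReal h ≤ qhDist G (γ 0) (γ t) →
      ENNReal.ofReal h ≤ qhDist G (γ t) (γ 1) →
      qhDist G (γ 0) (γ t) + qhDist G (γ t) (γ 1) ≤
        coarseQHLength G γ (Set.Icc 0 1) h := by
    intro t ht hco1 hco2
    rw [coarseQHLength]
    set u : ℕ → ℝ := fun i => if i = 0 then 0 else if i = 1 then t else 1 with hu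
    have humono : Monotone u := by
      apply monotone_nat_of_le_succ
      intro n
      match n with
      | 0 => simpa [hu] using ht.1
      | 1 => simpa [hu] using ht.2
      | (n+2) => simp [hu]
    have humem : ∀ i : ℕ, u i ∈ Set.Icc (0:ℝ) 1 := by
      intro i
      match i with
      | 0 => simp [hu]
      | 1 => simpa [hu] using ht
      | (n+2) => simp [hu]
    have hcoarse : ∀ i < 2, ENNReal.ofReal h ≤ qhDist G (γ (u i)) (γ (u (i+1))) := by
      intro i hi
      interval_cases i
      · simpa [hu] using hco1
      · simpa [hu] using hco2
    refine le_trans ?_ (le_iSup _ ⟨(2, u), one_le_two, humono, humem, hcoarse⟩)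
    simp [Finset.sum_range_succ, hu]
  set κ := ν * (3 * c * dist (γ 0) (γ 1) / (2 * r)) with hκdef
  have hκ0 : 0 ≤ κ := by
    rw [hκdef]
    exact mul_nonneg hν0 (div_nonneg
      (mul_nonneg (mul_nonneg (by norm_num) hc0) dist_nonneg) (by linarith))
  have hκhalf : κ ≤ ν / 2 := by
    rw [hκdef]
    have h1 : 3 * c * dist (γ 0) (γ 1) / (2 * r) ≤ 1 / 2 := by
      rw [div_le_div_iff₀ (by linarith : (0:ℝ) < 2*r) (by norm_num : (0:ℝ) < 2)]
      linarith [hr3]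
    calc ν * (3 * c * dist (γ 0) (γ 1) / (2 * r)) ≤ ν * (1/2) :=
        mul_le_mul_of_nonneg_left h1 hν0
      _ = ν / 2 := by ring
  have hsolidκ : coarseQHLength G γ (Set.Icc 0 1) h ≤ ENNReal.ofReal κ := by
    refine le_trans hsolid01 ?_
    have h1 : ENNReal.ofReal ν * qhDist G (γ 0) (γ 1) ≤
        ENNReal.ofReal ν * ENNReal.ofReal (3 * c * dist (γ 0) (γ 1) / (2 * r)) :=
      mul_le_mul_right hK _
    refine le_trans h1 ?_
    rw [hκdef, ENNReal.ofReal_mul hν0]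
  by_cases hcase : ∃ s t : ℝ, s ∈ Set.Icc (0:ℝ) 1 ∧ t ∈ Set.Icc (0:ℝ) 1 ∧ s ≤ t ∧
      ENNReal.ofReal h ≤ qhDist G (γ s) (γ t)
  · -- Case II : some pair of points on the arc is quasihyperbolically far apart
    obtain ⟨s₀, t₀, hs₀, ht₀, hst₀, hco₀⟩ := hcase
    have hhκ : ENNReal.ofReal h ≤ ENNReal.ofReal κ :=
      le_trans hco₀ (le_trans (hchain1 s₀ t₀ hs₀ ht₀ hst₀ hco₀) hsolidκ)
    have hexpκ : 0 ≤ Real.exp κ - 1 := by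
      have h1 : (1:ℝ) ≤ Real.exp κ := by
        calc (1:ℝ) = Real.exp 0 := (Real.exp_zero).symm
          _ ≤ Real.exp κ := Real.exp_le_exp.2 hκ0
      linarith
    have hpoint : ∀ t ∈ Set.Icc (0:ℝ) 1,
        dist (γ 0) (γ t) ≤ (r + dist (γ 0) (γ 1)) * (Real.exp κ - 1) ∨
        dist (γ t) (γ 1) ≤ (r + dist (γ 0) (γ 1)) * (Real.exp κ - 1) := by
      intro t ht
      have hbx : bdist G (γ 0) * (Real.exp κ - 1) ≤
          (r + dist (γ 0) (γ 1)) * (Real.exp κ - 1) :=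
        mul_le_mul_of_nonneg_right hδxr hexpκ
      have hby : bdist G (γ 1) * (Real.exp κ - 1) ≤
          (r + dist (γ 0) (γ 1)) * (Real.exp κ - 1) :=
        mul_le_mul_of_nonneg_right hδyr hexpκ
      by_cases hq1 : qhDist G (γ 0) (γ t) < ENNReal.ofReal h
      · left
        have hle : qhDist G (γ 0) (γ t) ≤ ENNReal.ofReal κ := le_trans hq1.le hhκ
        exact le_trans (aux_dist_le_left hGo hne hxG hκ0 hle) hbx
      · by_cases hq2 : qhDist G (γ t) (γ 1) < ENNReal.ofReal h
        · right
          have hle : qhDist G (γ t) (γ 1) ≤ ENNReal.ofReal κ := le_trans hq2.le hhκ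
          exact le_trans (aux_dist_le_right hGo hne hyG hκ0 hle) hby
        · push_neg at hq1 hq2
          have hsum := le_trans (hchain2 t ht hq1 hq2) hsolidκ
          left
          have hle : qhDist G (γ 0) (γ t) ≤ ENNReal.ofReal κ :=
            le_trans le_self_add hsum
          exact le_trans (aux_dist_le_left hGo hne hxG hκ0 hle) hbx
    have hE1 : (1:ℝ) ≤ Real.exp (ν/2) := by
      calc (1:ℝ) = Real.exp 0 := (Real.exp_zero).symm
        _ ≤ _ := Real.exp_le_exp.2 (by linarith)
    have hE2 : (2.7:ℝ) ≤ (Real.exp (ν/2))^2 := by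
      have h1 : Real.exp (((2:ℕ):ℝ) * (ν/2)) = (Real.exp (ν/2))^2 :=
        Real.exp_nat_mul (ν/2) 2
      have h2 : (((2:ℕ):ℝ)) * (ν/2) = ν := by push_cast; ring
      rw [h2] at h1
      rw [← h1]
      calc (2.7:ℝ) ≤ Real.exp 1 := by linarith [Real.exp_one_gt_d9]
        _ ≤ Real.exp ν := Real.exp_le_exp.2 hν
    have hE4 : Real.exp (2*ν) = (Real.exp (ν/2))^4 := by
      have h1 : Real.exp (((4:ℕ):ℝ) * (ν/2)) = (Real.exp (ν/2))^4 :=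
        Real.exp_nat_mul (ν/2) 4
      have h2 : (((4:ℕ):ℝ)) * (ν/2) = 2*ν := by push_cast; ring
      rw [h2] at h1
      exact h1
    have hνE : ν ≤ 2 * Real.exp (ν/2) - 2 := by
      have := Real.add_one_le_exp (ν/2)
      linarith
    have hPle : (r + dist (γ 0) (γ 1)) * (Real.exp κ - 1) ≤
        2 * ν * c * dist (γ 0) (γ 1) * Real.exp (ν/2) := by
      have hDr3 : 3 * dist (γ 0) (γ 1) ≤ r := by
        nlinarith [mul_nonneg hD0 (by linarith : (0:ℝ) ≤ c - 1)]
      have e0 : Real.exp κ ≤ Real.exp (ν/2) := Real.exp_le_exp.2 hκhalf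
      have e1 : Real.exp κ - 1 ≤ κ * Real.exp (ν/2) :=
        le_trans (aux_exp_sub_one_le hκ0) (mul_le_mul_of_nonneg_left e0 hκ0)
      have e2 : (r + dist (γ 0) (γ 1)) * (Real.exp κ - 1) ≤
          (r + dist (γ 0) (γ 1)) * (κ * Real.exp (ν/2)) :=
        mul_le_mul_of_nonneg_left e1 (by linarith)
      refine le_trans e2 ?_
      have e3 : (r + dist (γ 0) (γ 1)) * κ ≤ 2 * ν * c * dist (γ 0) (γ 1) := by
        rw [hκdef]
        have heq : (r + dist (γ 0) (γ 1)) * (ν * (3 * c * dist (γ 0) (γ 1) / (2 * r))) =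
            (r + dist (γ 0) (γ 1)) * ν * (3 * c * dist (γ 0) (γ 1)) / (2 * r) := by
          ring
        rw [heq, div_le_iff₀ (by linarith : (0:ℝ) < 2*r)]
        nlinarith [mul_nonneg (mul_nonneg (mul_nonneg hν0 hc0) hD0)
          (by linarith : (0:ℝ) ≤ r - 3*dist (γ 0) (γ 1))]
      have e4 : (r + dist (γ 0) (γ 1)) * (κ * Real.exp (ν/2)) =
          ((r + dist (γ 0) (γ 1)) * κ) * Real.exp (ν/2) := by ring
      rw [e4]
      exact mul_le_mul_of_nonneg_right e3 (Real.exp_pos _).le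
    have hscalar : 4*ν*c*Real.exp (ν/2) + 1 ≤ 6*c*((Real.exp (ν/2))^4 - 1) := by
      have hinner : 7 ≤ 6*(Real.exp (ν/2))^4 - 8*(Real.exp (ν/2))^2 + 8*Real.exp (ν/2) := by
        nlinarith [mul_le_mul_of_nonneg_left hE2
          (by positivity : (0:ℝ) ≤ 6*(Real.exp (ν/2))^2), hE2, hE1]
      have t1 : 0 ≤ 4*c*Real.exp (ν/2)*(2*Real.exp (ν/2) - 2 - ν) :=
        mul_nonneg (mul_nonneg (mul_nonneg (by norm_num) hc0) (by linarith)) (by linarith)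
      have t2 : 0 ≤ (c - 1)*(6*(Real.exp (ν/2))^4 - 8*(Real.exp (ν/2))^2 +
          8*Real.exp (ν/2) - 6) :=
        mul_nonneg (by linarith) (by linarith)
      nlinarith [t1, t2, hinner]
    apply EMetric.diam_le
    rintro p ⟨s, hs, rfl⟩ q ⟨t, ht, rfl⟩
    have hps := hpoint s hs
    have hpt := hpoint t ht
    have hkey : dist (γ s) (γ t) ≤
        2*((r + dist (γ 0) (γ 1)) * (Real.exp κ - 1)) + dist (γ 0) (γ 1) := by
      have htri1 := dist_triangle (γ s) (γ 0) (γ t)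
      have htri2 := dist_triangle (γ s) (γ 1) (γ t)
      have htri3 := dist_triangle4 (γ s) (γ 0) (γ 1) (γ t)
      have htri4 := dist_triangle4 (γ s) (γ 1) (γ 0) (γ t)
      have hc1 := dist_comm (γ s) (γ 0)
      have hc2 := dist_comm (γ s) (γ 1)
      have hc3 := dist_comm (γ 0) (γ t)
      have hc4 := dist_comm (γ 1) (γ t)
      have hc5 := dist_comm (γ 0) (γ 1)
      rcases hps with h1 | h1 <;> rcases hpt with h2 | h2 <;>
        linarith [htri1, htri2, htri3, htri4, hc1, hc2, hc3, hc4, hc5, hD0]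
    rw [edist_dist]
    apply ENNReal.ofReal_le_ofReal
    refine le_trans hkey (le_trans ?_ (le_max_left _ _))
    rw [hE4]
    have hmul := mul_le_mul_of_nonneg_right hscalar hD0
    nlinarith [hPle, hmul, hD0, (Real.exp_pos (ν/2)).le]
  · -- Case I : every ordered pair of points on the arc is quasihyperbolically close
    push_neg at hcase
    rcases le_total (bdist G (γ 0)) (bdist G (γ 1)) with hxy | hxy
    · have hrx' : bdist G (γ 0) = r := by rw [← hr, min_eq_left hxy]
      have hpt : ∀ t ∈ Set.Icc (0:ℝ) 1, dist (γ 0) (γ t) ≤ r * (Real.exp h - 1) := by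
        intro t ht
        have hq := (hcase 0 t h01 ht ht.1).le
        have h1 := aux_dist_le_left hGo hne hxG hh hq
        rwa [hrx'] at h1
      apply EMetric.diam_le
      rintro p ⟨s, hs, rfl⟩ q ⟨t, ht, rfl⟩
      have h1 := hpt s hs
      have h2 := hpt t ht
      rw [edist_dist]
      apply ENNReal.ofReal_le_ofReal
      refine le_trans ?_ (le_max_right _ _)
      have htri := dist_triangle (γ s) (γ 0) (γ t)
      have hcm := dist_comm (γ s) (γ 0)
      linarith
    · have hry' : bdist G (γ 1) = r := by rw [← hr, min_eq_right hxy]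
      have hpt : ∀ t ∈ Set.Icc (0:ℝ) 1, dist (γ t) (γ 1) ≤ r * (Real.exp h - 1) := by
        intro t ht
        have hq := (hcase t 1 ht h11 ht.2).le
        have h1 := aux_dist_le_right hGo hne hyG hh hq
        rwa [hry'] at h1
      apply EMetric.diam_le
      rintro p ⟨s, hs, rfl⟩ q ⟨t, ht, rfl⟩
      have h1 := hpt s hs
      have h2 := hpt t ht
      rw [edist_dist]
      apply ENNReal.ofReal_le_ofReal
      refine le_trans ?_ (le_max_right _ _)
      have htri := dist_triangle (γ s) (γ 1) (γ t)
      have hcm := dist_comm (γ 1) (γ t)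
      linarith
end

section
/- Suppose that X is a c-quasiconvex metric space and G ⊊ X is a domain. Suppose further that for x, y ∈ G: (1) γ is an ε-short arc in G connecting x and y with 0 < ε ≤ k_G(x,y)/2, and (2) |x−y| ≤ (1/(3c)) min{δ_G(x), δ_G(y)}. Then ℓ(γ) ≤ (9/2) c e^{3/2} |x−y|. -/
open Set Metric ENNReal Filter

universe u v

lemma le_biSup_real {f : ℝ → ℝ} {s : Set ℝ} {B : ℝ} (hB : ∀ t ∈ s, f t ≤ B)
    {t₀ : ℝ} (ht₀ : t₀ ∈ s) : f t₀ ≤ ⨆ t ∈ s, f t := by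
  have hbdd : BddAbove (Set.range fun t => ⨆ _ : t ∈ s, f t) := by
    refine ⟨max B 0, ?_⟩
    rintro _ ⟨t, rfl⟩
    dsimp only
    by_cases ht : t ∈ s
    · rw [ciSup_pos ht]; exact le_max_of_le_left (hB t ht)
    · haveI : IsEmpty (t ∈ s) := ⟨ht⟩
      rw [Real.iSup_of_isEmpty]; exact le_max_right _ _
  calc f t₀ = ⨆ _ : t₀ ∈ s, f t₀ := (ciSup_pos (f := fun _ => f t₀) ht₀).symm
    _ ≤ ⨆ t ∈ s, f t := le_ciSup hbdd t₀

lemma biSup_real_le {f : ℝ → ℝ} {s : Set ℝ} {B : ℝ} (hB0 : 0 ≤ B)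
    (hB : ∀ t ∈ s, f t ≤ B) : (⨆ t ∈ s, f t) ≤ B := by
  refine ciSup_le fun t => ?_
  by_cases ht : t ∈ s
  · rw [ciSup_pos ht]; exact hB t ht
  · haveI : IsEmpty (t ∈ s) := ⟨ht⟩
    rw [Real.iSup_of_isEmpty]; exact hB0


/-- length bound for short arcs with nearby endpoints. -/
theorem length_short_arc_le {X : Type u} [MetricSpace X] (c : ℝ) (hc : 1 ≤ c)
    (hX : IsCQuasiconvex (Set.univ : Set X) c)
    (G : Set X) (hG : IsProperDomain G) (γ : ℝ → X) (ε : ℝ)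
    (hγ : IsShortArcIn G γ ε) (hε : 0 < ε)
    (hεk : ENNReal.ofReal (2 * ε) ≤ qhDist G (γ 0) (γ 1))
    (hxy : dist (γ 0) (γ 1) ≤ (1 / (3 * c)) * min (bdist G (γ 0)) (bdist G (γ 1))) :
    eVariationOn γ (Set.Icc 0 1) ≤
      ENNReal.ofReal ((9 / 2) * c * Real.exp (3 / 2) * dist (γ 0) (γ 1)) := by
  obtain ⟨hGopen, hGconn, hGne⟩ := hG
  obtain ⟨⟨hγcont, hγmaps⟩, hγinj, hγshort⟩ := hγ
  have hcne : Gᶜ.Nonempty := Set.nonempty_compl.mpr hGne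
  have hGclosed : IsClosed Gᶜ := hGopen.isClosed_compl
  have hbpos : ∀ z ∈ G, 0 < bdist G z := fun z hz =>
    (hGclosed.notMem_iff_infDist_pos hcne).mp (fun h => h hz)
  have hmemG : ∀ z : X, 0 < bdist G z → z ∈ G := by
    intro z hz
    by_contra h
    simp only [bdist] at hz
    have h2 : Metric.infDist z Gᶜ = 0 :=
      Metric.infDist_zero_of_mem (show z ∈ Gᶜ from h)
    rw [h2] at hz
    exact lt_irrefl 0 hz
  have h0 : (0:ℝ) ∈ Set.Icc (0:ℝ) 1 := by norm_num
  have h1 : (1:ℝ) ∈ Set.Icc (0:ℝ) 1 := by norm_num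
  have hxG : γ 0 ∈ G := hγmaps h0
  have hyG : γ 1 ∈ G := hγmaps h1
  set dx := bdist G (γ 0) with hdxdef
  set dy := bdist G (γ 1) with hdydef
  set r := dist (γ 0) (γ 1) with hrdef
  have hdx : 0 < dx := hbpos _ hxG
  have hc0 : (0:ℝ) < c := lt_of_lt_of_le one_pos hc
  have hr : 0 < r := by
    rcases lt_or_eq_of_le (dist_nonneg : (0:ℝ) ≤ dist (γ 0) (γ 1)) with h | h
    · exact h
    · exfalso
      have : γ 0 = γ 1 := dist_eq_zero.mp h.symm
      have h01 : (0:ℝ) = 1 := hγinj h0 h1 this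
      norm_num at h01
  have h3c : (0:ℝ) < 3 * c := by linarith
  rw [one_div_mul_eq_div] at hxy
  have hmin : r * (3 * c) ≤ min dx dy := (le_div_iff₀ h3c).mp hxy
  have hcrx : c * r ≤ dx / 3 := by
    have h1' := min_le_left dx dy
    nlinarith
  -- the quasiconvex arc from x to y
  obtain ⟨α, hαcont, -, hα0, hα1, hαvar⟩ := hX (γ 0) trivial (γ 1) trivial
  have hαdist : ∀ t ∈ Set.Icc (0:ℝ) 1, dist (α t) (γ 0) ≤ c * r := by
    intro t ht
    have h2 : edist (α t) (α 0) ≤ ENNReal.ofReal (c * r) :=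
      le_trans (eVariationOn.edist_le α ht h0) hαvar
    rw [hα0, edist_dist] at h2
    exact (ENNReal.ofReal_le_ofReal_iff (by positivity)).mp h2
  have hαlow : ∀ t ∈ Set.Icc (0:ℝ) 1, 2/3 * dx ≤ bdist G (α t) := by
    intro t ht
    have h2 : Metric.infDist (γ 0) Gᶜ ≤ Metric.infDist (α t) Gᶜ + dist (γ 0) (α t) :=
      Metric.infDist_le_infDist_add_dist
    have h3 := hαdist t ht
    rw [dist_comm (γ 0) (α t)] at h2
    simp only [bdist] at *
    linarith
  have hαup : ∀ t ∈ Set.Icc (0:ℝ) 1, bdist G (α t) ≤ dx + c * r := by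
    intro t ht
    have h2 : Metric.infDist (α t) Gᶜ ≤ Metric.infDist (γ 0) Gᶜ + dist (α t) (γ 0) :=
      Metric.infDist_le_infDist_add_dist
    have h3 := hαdist t ht
    simp only [bdist] at *
    linarith
  have hαG : ∀ t ∈ Set.Icc (0:ℝ) 1, α t ∈ G := fun t ht =>
    hmemG _ (lt_of_lt_of_le (by linarith) (hαlow t ht))
  set A := 3 * c * r / (2 * dx) with hAdef
  have hA0 : 0 ≤ A := by positivity
  -- bound on qhLength of α
  have hqα : qhLength G α (Set.Icc 0 1) ≤ ENNReal.ofReal (c * r) / ENNReal.ofReal (2/3 * dx) := by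
    rw [qhLength]
    refine iSup_le fun p => ?_
    have hu : Monotone p.2.1 := p.2.2.1
    have hus : ∀ i, p.2.1 i ∈ Set.Icc (0:ℝ) 1 := p.2.2.2
    have hstep : ∀ i ∈ Finset.range p.1,
        edist (α (p.2.1 (i + 1))) (α (p.2.1 i)) /
          ENNReal.ofReal (⨆ t ∈ Set.Icc (p.2.1 i) (p.2.1 (i + 1)), bdist G (α t)) ≤
        edist (α (p.2.1 (i + 1))) (α (p.2.1 i)) / ENNReal.ofReal (2/3 * dx) := by
      intro i _
      refine ENNReal.div_le_div_left (ENNReal.ofReal_le_ofReal ?_) _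
      have hsub : Set.Icc (p.2.1 i) (p.2.1 (i+1)) ⊆ Set.Icc (0:ℝ) 1 :=
        Set.Icc_subset_Icc (hus i).1 (hus (i+1)).2
      have ht₀ : p.2.1 i ∈ Set.Icc (p.2.1 i) (p.2.1 (i+1)) :=
        ⟨le_refl _, hu (Nat.le_succ i)⟩
      exact le_trans (hαlow _ (hus i))
        (le_biSup_real (fun t ht => hαup t (hsub ht)) ht₀)
    calc ∑ i ∈ Finset.range p.1,
          edist (α (p.2.1 (i + 1))) (α (p.2.1 i)) /
            ENNReal.ofReal (⨆ t ∈ Set.Icc (p.2.1 i) (p.2.1 (i + 1)), bdist G (α t))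
        ≤ ∑ i ∈ Finset.range p.1,
            edist (α (p.2.1 (i + 1))) (α (p.2.1 i)) / ENNReal.ofReal (2/3 * dx) :=
          Finset.sum_le_sum hstep
      _ = (∑ i ∈ Finset.range p.1, edist (α (p.2.1 (i + 1))) (α (p.2.1 i))) /
            ENNReal.ofReal (2/3 * dx) := by
          simp only [div_eq_mul_inv, ← Finset.sum_mul]
      _ ≤ ENNReal.ofReal (c * r) / ENNReal.ofReal (2/3 * dx) := by
          gcongr
          exact le_trans (eVariationOn.sum_le (f := α) (n := p.1) hu hus) hαvar
  have hkle : qhDist G (γ 0) (γ 1) ≤ ENNReal.ofReal A := by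
    have hmem : α ∈ {γ' : ℝ → X | IsCurveIn G γ' ∧ γ' 0 = γ 0 ∧ γ' 1 = γ 1} :=
      ⟨⟨hαcont, fun t ht => hαG t ht⟩, hα0, hα1⟩
    refine le_trans (iInf₂_le α hmem) (le_trans hqα ?_)
    rw [← ENNReal.ofReal_div_of_pos (by linarith)]
    apply ENNReal.ofReal_le_ofReal
    rw [hAdef]
    rw [div_le_div_iff₀ (by linarith) (by linarith)]
    ring_nf
    nlinarith
  have hεA : 2 * ε ≤ A := (ENNReal.ofReal_le_ofReal_iff hA0).mp (le_trans hεk hkle)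
  set q := 9 * c * r / (4 * dx) with hqdef
  have hq0 : 0 ≤ q := by positivity
  have hK : qhLength G γ (Set.Icc 0 1) ≤ ENNReal.ofReal q := by
    refine le_trans hγshort (le_trans (add_le_add hkle le_rfl) ?_)
    rw [← ENNReal.ofReal_add hA0 hε.le]
    apply ENNReal.ofReal_le_ofReal
    rw [hAdef] at hεA ⊢
    rw [hqdef]
    rw [div_add' _ _ _ (by positivity : (2:ℝ) * dx ≠ 0)] at *
    rw [div_le_div_iff₀ (by linarith) (by linarith)]
    have hεle : ε ≤ 3 * c * r / (2 * dx) / 2 := by linarith [hεA]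
    have h2 : ε * (2 * dx) ≤ 3 * c * r / 2 := by
      rw [div_div] at hεle
      rw [le_div_iff₀ (by linarith : (0:ℝ) < 2 * dx * 2)] at hεle
      linarith
    nlinarith
  -- global bound on bdist along γ
  have hbc : ContinuousOn (fun t => bdist G (γ t)) (Set.Icc (0:ℝ) 1) :=
    (Metric.continuous_infDist_pt Gᶜ).comp_continuousOn hγcont
  obtain ⟨B₀, hB₀⟩ := isCompact_Icc.bddAbove_image hbc
  have hB0' : ∀ t ∈ Set.Icc (0:ℝ) 1, bdist G (γ t) ≤ B₀ := fun t ht =>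
    hB₀ (Set.mem_image_of_mem _ ht)
  set M := ⨆ t ∈ Set.Icc (0:ℝ) 1, bdist G (γ t) with hMdef
  have hMlb : dx ≤ M := le_biSup_real hB0' h0
  have hM0 : 0 ≤ M := le_trans hdx.le hMlb
  -- eVariation ≤ M * qhLength
  have hLM : eVariationOn γ (Set.Icc 0 1) ≤
      ENNReal.ofReal M * qhLength G γ (Set.Icc 0 1) := by
    rw [eVariationOn]
    refine iSup_le fun p => ?_
    have hu : Monotone p.2.1 := p.2.2.1
    have hus : ∀ i, p.2.1 i ∈ Set.Icc (0:ℝ) 1 := p.2.2.2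
    have hterm : ∀ i ∈ Finset.range p.1,
        edist (γ (p.2.1 (i + 1))) (γ (p.2.1 i)) ≤
        ENNReal.ofReal M * (edist (γ (p.2.1 (i + 1))) (γ (p.2.1 i)) /
          ENNReal.ofReal (⨆ t ∈ Set.Icc (p.2.1 i) (p.2.1 (i + 1)), bdist G (γ t))) := by
      intro i _
      have hsub : Set.Icc (p.2.1 i) (p.2.1 (i+1)) ⊆ Set.Icc (0:ℝ) 1 :=
        Set.Icc_subset_Icc (hus i).1 (hus (i+1)).2
      have ht₀ : p.2.1 i ∈ Set.Icc (p.2.1 i) (p.2.1 (i+1)) :=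
        ⟨le_refl _, hu (Nat.le_succ i)⟩
      have hSpos : 0 < ⨆ t ∈ Set.Icc (p.2.1 i) (p.2.1 (i+1)), bdist G (γ t) :=
        lt_of_lt_of_le (hbpos _ (hγmaps (hus i)))
          (le_biSup_real (fun t ht => hB0' t (hsub ht)) ht₀)
      have hSle : (⨆ t ∈ Set.Icc (p.2.1 i) (p.2.1 (i+1)), bdist G (γ t)) ≤ M :=
        biSup_real_le hM0 (fun t ht => le_biSup_real hB0' (hsub ht))
      calc edist (γ (p.2.1 (i + 1))) (γ (p.2.1 i))
          = ENNReal.ofReal (⨆ t ∈ Set.Icc (p.2.1 i) (p.2.1 (i+1)), bdist G (γ t)) *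
            (edist (γ (p.2.1 (i + 1))) (γ (p.2.1 i)) /
              ENNReal.ofReal (⨆ t ∈ Set.Icc (p.2.1 i) (p.2.1 (i+1)), bdist G (γ t))) :=
            (ENNReal.mul_div_cancel (ENNReal.ofReal_pos.mpr hSpos).ne'
              ENNReal.ofReal_ne_top).symm
        _ ≤ ENNReal.ofReal M * (edist (γ (p.2.1 (i + 1))) (γ (p.2.1 i)) /
              ENNReal.ofReal (⨆ t ∈ Set.Icc (p.2.1 i) (p.2.1 (i+1)), bdist G (γ t))) :=
            mul_le_mul_left (ENNReal.ofReal_le_ofReal hSle) _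
    calc ∑ i ∈ Finset.range p.1, edist (γ (p.2.1 (i + 1))) (γ (p.2.1 i))
        ≤ ∑ i ∈ Finset.range p.1, ENNReal.ofReal M *
            (edist (γ (p.2.1 (i + 1))) (γ (p.2.1 i)) /
              ENNReal.ofReal (⨆ t ∈ Set.Icc (p.2.1 i) (p.2.1 (i + 1)), bdist G (γ t))) :=
          Finset.sum_le_sum hterm
      _ = ENNReal.ofReal M * ∑ i ∈ Finset.range p.1,
            edist (γ (p.2.1 (i + 1))) (γ (p.2.1 i)) /
              ENNReal.ofReal (⨆ t ∈ Set.Icc (p.2.1 i) (p.2.1 (i + 1)), bdist G (γ t)) :=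
          (Finset.mul_sum _ _ _).symm
      _ ≤ ENNReal.ofReal M * qhLength G γ (Set.Icc 0 1) := by
          refine mul_le_mul_right ?_ _
          have hple := le_iSup
            (fun p : ℕ × { u : ℕ → ℝ // Monotone u ∧ ∀ i, u i ∈ Set.Icc (0:ℝ) 1 } =>
              ∑ i ∈ Finset.range p.1,
                edist (γ (p.2.1 (i + 1))) (γ (p.2.1 i)) /
                  ENNReal.ofReal (⨆ t ∈ Set.Icc (p.2.1 i) (p.2.1 (i + 1)), bdist G (γ t))) p
          rw [qhLength]
          exact hple
  have hLMq : eVariationOn γ (Set.Icc 0 1) ≤ ENNReal.ofReal (M * q) := by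
    refine le_trans hLM (le_trans (mul_le_mul_right hK _) ?_)
    rw [ENNReal.ofReal_mul hM0]
  have hfin : eVariationOn γ (Set.Icc 0 1) ≠ ⊤ :=
    ne_top_of_le_ne_top ENNReal.ofReal_ne_top hLMq
  set L := (eVariationOn γ (Set.Icc 0 1)).toReal with hLdef
  have hLeq : eVariationOn γ (Set.Icc 0 1) = ENNReal.ofReal L :=
    (ENNReal.ofReal_toReal hfin).symm
  have hL0 : 0 ≤ L := ENNReal.toReal_nonneg
  have hLle : L ≤ M * q :=
    ENNReal.toReal_le_of_le_ofReal (by positivity) hLMq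
  have hdistle : ∀ t ∈ Set.Icc (0:ℝ) 1, dist (γ t) (γ 0) ≤ L := by
    intro t ht
    have h2 : edist (γ t) (γ 0) ≤ ENNReal.ofReal L := by
      rw [← hLeq]; exact eVariationOn.edist_le γ ht h0
    rw [edist_dist] at h2
    exact (ENNReal.ofReal_le_ofReal_iff hL0).mp h2
  have hMub : M ≤ dx + L := by
    refine biSup_real_le (by linarith) ?_
    intro t ht
    have h2 : Metric.infDist (γ t) Gᶜ ≤ Metric.infDist (γ 0) Gᶜ + dist (γ t) (γ 0) :=
      Metric.infDist_le_infDist_add_dist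
    have h3 := hdistle t ht
    simp only [bdist] at *
    linarith
  have hq34 : q ≤ 3 / 4 := by
    rw [hqdef, div_le_iff₀ (by linarith : (0:ℝ) < 4 * dx)]
    nlinarith
  have hL3 : L ≤ 3 * dx := by nlinarith
  have hM4 : M ≤ 4 * dx := by linarith
  have hL9 : L ≤ 9 * c * r := by
    have h2 : M * q ≤ 4 * dx * q := mul_le_mul_of_nonneg_right hM4 hq0
    have h3 : 4 * dx * q = 9 * c * r := by
      rw [hqdef]; field_simp
    linarith
  have hexp : (2:ℝ) ≤ Real.exp (3/2) := by
    have := Real.add_one_le_exp (3/2 : ℝ)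
    linarith
  rw [hLeq]
  apply ENNReal.ofReal_le_ofReal
  nlinarith [mul_nonneg (mul_nonneg hc0.le hr.le) (by linarith : (0:ℝ) ≤ Real.exp (3/2) - 2)]
end

section
/- Suppose G ⊊ X is a b-uniform domain in a rectifiably connected metric space X. Then for any x, y ∈ G, one has k_G(x,y) ≤ 4b² log(1 + |x−y|/min{δ_G(x), δ_G(y)}). -/
open Set Metric ENNReal Filter

universe u v


section AuxiliaryLemmas
open Set

namespace QHAux

lemma log_ratio {A C : ℝ} (hC : 0 < C) (hCA : C ≤ A) :
    (A - C) / A ≤ Real.log A - Real.log C := by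
  have hA : 0 < A := lt_of_lt_of_le hC hCA
  have h := Real.log_le_sub_one_of_pos (show (0:ℝ) < C / A by positivity)
  rw [Real.log_div hC.ne' hA.ne'] at h
  have h2 : (A - C)/A = 1 - C/A := by field_simp
  linarith

lemma log_one_add_le_sq_mul_log {b : ℝ} (hb : 1 ≤ b) :
    Real.log (1 + b) ≤ b^2 * Real.log (1 + 1/b) := by
  have hb0 : (0:ℝ) < b := lt_of_lt_of_le one_pos hb
  have h1 : (2:ℝ) ≤ (1 + 1/b) ^ b := by
    have := one_add_mul_self_le_rpow_one_add (s := 1/b) (by linarith [one_div_nonneg.mpr hb0.le]) hb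
    rw [mul_one_div, div_self hb0.ne'] at this
    linarith
  have h2 : (1:ℝ) + b ≤ (2:ℝ) ^ b := by
    have := one_add_mul_self_le_rpow_one_add (s := (1:ℝ)) (by norm_num) hb
    rw [mul_one] at this
    norm_num at this ⊢
    exact this
  have h3 : (1:ℝ) + b ≤ ((1 + 1/b) ^ b) ^ b :=
    le_trans h2 (Real.rpow_le_rpow (by norm_num) h1 (by linarith))
  have h4 : ((1 + 1/b) ^ b) ^ b = (1 + 1/b) ^ (b^2) := by
    rw [← Real.rpow_mul (by positivity), sq]
  rw [h4] at h3
  calc Real.log (1 + b) ≤ Real.log ((1 + 1/b) ^ (b^2)) :=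
        Real.log_le_log (by positivity) h3
    _ = b^2 * Real.log (1 + 1/b) := Real.log_rpow (by positivity) _

/-- The piecewise log potential for one side. -/
noncomputable def P (δ0 b s : ℝ) : ℝ :=
  if s ≤ b*δ0/(1+b) then Real.log δ0 - Real.log (δ0 - s)
  else Real.log (1+b) + b*(Real.log s - Real.log (b*δ0/(1+b)))

lemma P_zero {δ0 b : ℝ} (hδ : 0 < δ0) (hb : 1 ≤ b) : P δ0 b 0 = 0 := by
  have : (0:ℝ) ≤ b*δ0/(1+b) := by positivity
  simp [P, this]

lemma PX {δ0 b a m D : ℝ} (hδ : 0 < δ0) (hb : 1 ≤ b) (ha : 0 ≤ a) (ham : a ≤ m)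
    (hD1 : δ0 - a ≤ D) (hD2 : m / b ≤ D) (hD0 : 0 < D) :
    (m - a)/D ≤ P δ0 b m - P δ0 b a := by
  have hb0 : (0:ℝ) < b := lt_of_lt_of_le one_pos hb
  have hb1 : (0:ℝ) < 1 + b := by linarith
  set s0 := b*δ0/(1+b) with hs0def
  have hs0pos : 0 < s0 := by positivity
  have hs0lt : s0 < δ0 := by
    rw [hs0def, div_lt_iff₀ hb1]; nlinarith
  have hsub : δ0 - s0 = δ0/(1+b) := by
    rw [hs0def, eq_div_iff hb1.ne']
    field_simp
    ring
  have hlogsub : Real.log (δ0 - s0) = Real.log δ0 - Real.log (1+b) := by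
    rw [hsub, Real.log_div hδ.ne' hb1.ne']
  by_cases hm : m ≤ s0
  · have ham2 : a ≤ s0 := le_trans ham hm
    rw [P, P, if_pos hm, if_pos ham2]
    have hC : 0 < δ0 - m := by linarith
    have h := log_ratio hC (by linarith : δ0 - m ≤ δ0 - a)
    have h2 : (m - a)/D ≤ (m - a)/(δ0 - a) :=
      div_le_div_of_nonneg_left (by linarith) (by linarith) hD1
    have h3 : ((δ0 - a) - (δ0 - m)) = m - a := by ring
    rw [h3] at h
    linarith
  · push_neg at hm
    have hmpos : 0 < m := lt_trans hs0pos hm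
    have hmb : 0 < m / b := by positivity
    by_cases hax : a ≤ s0
    · rw [P, P, if_neg (not_le.mpr hm), if_pos hax]
      have h1 : (s0 - a)/D ≤ Real.log (δ0 - a) - Real.log (δ0 - s0) := by
        have hC : 0 < δ0 - s0 := by linarith
        have h := log_ratio hC (by linarith : δ0 - s0 ≤ δ0 - a)
        have h3 : ((δ0 - a) - (δ0 - s0)) = s0 - a := by ring
        rw [h3] at h
        have h2 : (s0 - a)/D ≤ (s0 - a)/(δ0 - a) :=
          div_le_div_of_nonneg_left (by linarith) (by linarith) hD1
        linarith
      have h2 : (m - s0)/D ≤ b * (Real.log m - Real.log s0) := by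
        have h := log_ratio hs0pos hm.le
        have h2 : (m - s0)/D ≤ (m - s0)/(m/b) :=
          div_le_div_of_nonneg_left (by linarith) hmb hD2
        have h3 : (m - s0)/(m/b) = b * ((m - s0)/m) := by
          field_simp
        rw [h3] at h2
        nlinarith [h, div_nonneg (by linarith : (0:ℝ) ≤ m - s0) hmpos.le]
      have hsplit : (m - a)/D = (s0 - a)/D + (m - s0)/D := by
        rw [← add_div]; ring_nf
      rw [hsplit]
      linarith
    · push_neg at hax
      rw [P, P, if_neg (not_le.mpr hm), if_neg (not_le.mpr hax)]
      have hapos : 0 < a := lt_trans hs0pos hax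
      have h := log_ratio hapos ham
      have h2 : (m - a)/D ≤ (m - a)/(m/b) :=
        div_le_div_of_nonneg_left (by linarith) hmb hD2
      have h3 : (m - a)/(m/b) = b * ((m - a)/m) := by field_simp
      rw [h3] at h2
      nlinarith [div_nonneg (by linarith : (0:ℝ) ≤ m - a) hmpos.le]

section
variable {δx δy b ℓ d δ : ℝ}

/-- Pointwise lower bound for the boundary distance along the arc, as a
function of arclength. -/
noncomputable def Fl (δx δy b ℓ s : ℝ) : ℝ :=
  max (max (δx - s) (δy - (ℓ - s))) (min s (ℓ - s) / b)

lemma Fl_pos (hδx : 0 < δx) (hδy : 0 < δy) (hb : 1 ≤ b) {s : ℝ}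
    (hs : 0 ≤ s) (hsl : s ≤ ℓ) : 0 < Fl δx δy b ℓ s := by
  have hb0 : (0:ℝ) < b := lt_of_lt_of_le one_pos hb
  rcases le_total (s*2) ℓ with h | h
  · have hmin : min s (ℓ - s) = s := min_eq_left (by linarith)
    rcases lt_or_ge s δx with h2 | h2
    · exact lt_of_lt_of_le (by linarith) (le_trans (le_max_left _ _) (le_max_left _ _))
    · refine lt_of_lt_of_le ?_ (le_max_right _ _)
      rw [hmin]
      have hs0 : 0 < s := lt_of_lt_of_le hδx h2
      positivity
  · rcases lt_or_ge (ℓ - s) δy with h2 | h2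
    · exact lt_of_lt_of_le (by linarith) (le_trans (le_max_right _ _) (le_max_left _ _))
    · have hmin : min s (ℓ - s) = ℓ - s := min_eq_right (by linarith)
      refine lt_of_lt_of_le ?_ (le_max_right _ _)
      rw [hmin]
      have : 0 < ℓ - s := lt_of_lt_of_le hδy h2
      positivity

lemma Fl_le (hδx : 0 < δx) (hδy : 0 < δy) (hb : 1 ≤ b) (hl : 0 ≤ ℓ) {s : ℝ}
    (hs : 0 ≤ s) (hsl : s ≤ ℓ) : Fl δx δy b ℓ s ≤ max (max δx δy) ℓ := by
  have hb0 : (0:ℝ) < b := lt_of_lt_of_le one_pos hb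
  refine max_le (max_le ?_ ?_) ?_
  · exact le_trans (by linarith) (le_trans (le_max_left δx δy) (le_max_left _ _))
  · exact le_trans (by linarith) (le_trans (le_max_right δx δy) (le_max_left _ _))
  · refine le_trans ?_ (le_max_right (max δx δy) ℓ)
    have h1 : min s (ℓ - s) ≤ ℓ := le_trans (min_le_left _ _) hsl
    have h2 : 0 ≤ min s (ℓ - s) := le_min hs (by linarith)
    calc min s (ℓ - s) / b ≤ min s (ℓ - s) / 1 :=
          div_le_div_of_nonneg_left h2 one_pos hb
      _ = min s (ℓ - s) := div_one _
      _ ≤ ℓ := h1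

/-- Case-2 potential. -/
noncomputable def Phi2 (δx δy b ℓ s : ℝ) : ℝ :=
  P δx b (min s (ℓ/2)) - P δy b (ℓ - max s (ℓ/2))

lemma master2 (hδx : 0 < δx) (hδy : 0 < δy) (hb : 1 ≤ b) (hl : 0 < ℓ)
    {a c D : ℝ} (ha : 0 ≤ a) (hac : a ≤ c) (hcl : c ≤ ℓ)
    (hD : ∀ s, a ≤ s → s ≤ c → Fl δx δy b ℓ s ≤ D) :
    (c - a)/D ≤ Phi2 δx δy b ℓ c - Phi2 δx δy b ℓ a := by
  have hb0 : (0:ℝ) < b := lt_of_lt_of_le one_pos hb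
  have hD0 : 0 < D :=
    lt_of_lt_of_le (Fl_pos hδx hδy hb ha (le_trans hac hcl)) (hD a le_rfl hac)
  have hDxa : δx - a ≤ D :=
    le_trans (le_trans (le_max_left _ _) (le_max_left _ _)) (hD a le_rfl hac)
  have hDyc : δy - (ℓ - c) ≤ D :=
    le_trans (le_trans (le_max_right _ _) (le_max_left _ _)) (hD c hac le_rfl)
  rcases le_or_gt c (ℓ/2) with hc2 | hc2
  · -- wholly in the left half
    have h1 : Phi2 δx δy b ℓ c - Phi2 δx δy b ℓ a = P δx b c - P δx b a := by
      unfold Phi2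
      rw [min_eq_left hc2, min_eq_left (hac.trans hc2), max_eq_right hc2,
        max_eq_right (hac.trans hc2)]
      ring
    rw [h1]
    refine PX hδx hb ha hac hDxa ?_ hD0
    have hmin : min c (ℓ - c) = c := min_eq_left (by linarith)
    refine le_trans ?_ (hD c hac le_rfl)
    refine le_trans ?_ (le_max_right _ _)
    rw [hmin]
  rcases le_or_gt (ℓ/2) a with ha2 | ha2
  · -- wholly in the right half
    have h1 : Phi2 δx δy b ℓ c - Phi2 δx δy b ℓ a
        = P δy b (ℓ - a) - P δy b (ℓ - c) := by
      unfold Phi2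
      rw [min_eq_right ha2, min_eq_right (ha2.trans hac), max_eq_left ha2,
        max_eq_left (ha2.trans hac)]
      ring
    rw [h1]
    have h2 := PX hδy hb (by linarith : (0:ℝ) ≤ ℓ - c) (by linarith : ℓ - c ≤ ℓ - a)
      hDyc ?_ hD0
    · have : (ℓ - a) - (ℓ - c) = c - a := by ring
      rw [this] at h2
      exact h2
    · have hmin : min a (ℓ - a) = ℓ - a := min_eq_right (by linarith)
      refine le_trans ?_ (hD a le_rfl hac)
      refine le_trans ?_ (le_max_right _ _)
      rw [hmin]
  · -- straddling the midpoint
    have hmidD : (ℓ/2)/b ≤ D := by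
      refine le_trans ?_ (hD (ℓ/2) (by linarith) (by linarith))
      refine le_trans ?_ (le_max_right _ _)
      have : min (ℓ/2) (ℓ - ℓ/2) = ℓ/2 := by rw [min_eq_left (by linarith)]
      rw [this]
    have e1 := PX hδx hb ha (by linarith : a ≤ ℓ/2) hDxa hmidD hD0
    have e2 := PX hδy hb (by linarith : (0:ℝ) ≤ ℓ - c)
      (by linarith : ℓ - c ≤ ℓ/2) hDyc hmidD hD0
    have h1 : Phi2 δx δy b ℓ c - Phi2 δx δy b ℓ a
        = (P δx b (ℓ/2) - P δx b a) + (P δy b (ℓ/2) - P δy b (ℓ - c)) := by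
      unfold Phi2
      rw [min_eq_right (by linarith : ℓ/2 ≤ c), min_eq_left (by linarith : a ≤ ℓ/2),
        max_eq_left (by linarith : ℓ/2 ≤ c), max_eq_right (by linarith : a ≤ ℓ/2)]
      have : ℓ - ℓ/2 = ℓ/2 := by ring
      rw [this]
      ring
    have hsplit : (c - a)/D = (ℓ/2 - a)/D + (ℓ/2 - (ℓ - c))/D := by
      rw [← add_div]; ring_nf
    rw [h1, hsplit]
    linarith

end
section
variable {δx δy b ℓ d δ : ℝ}

lemma Pbound {δ0 : ℝ} (hδ0 : 0 < δ0) (hδ : 0 < δ) (hδδ0 : δ ≤ δ0) (hb : 1 ≤ b)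
    (hd : 0 < d) (hl0 : 0 < ℓ) (hld : ℓ ≤ b*d) (hcase : δ ≤ b*d) :
    P δ0 b (ℓ/2) ≤ 2*b^2*Real.log (1 + d/δ) := by
  have hb0 : (0:ℝ) < b := lt_of_lt_of_le one_pos hb
  have hb1 : (0:ℝ) < 1 + b := by linarith
  have hu : 0 < d/δ := by positivity
  have hlog0 : 0 ≤ Real.log (1 + d/δ) := Real.log_nonneg (by linarith)
  have hinv : 1/b ≤ d/δ := by
    rw [div_le_div_iff₀ hb0 hδ]
    nlinarith
  have hkey : Real.log (1 + b) ≤ b^2 * Real.log (1 + d/δ) := by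
    refine le_trans (log_one_add_le_sq_mul_log hb) ?_
    have : Real.log (1 + 1/b) ≤ Real.log (1 + d/δ) :=
      Real.log_le_log (by positivity) (by linarith)
    nlinarith
  set s0 := b*δ0/(1+b) with hs0def
  have hs0pos : 0 < s0 := by positivity
  have hs0lt : s0 < δ0 := by rw [hs0def, div_lt_iff₀ hb1]; nlinarith
  by_cases h : ℓ/2 ≤ s0
  · rw [P, if_pos h]
    have h1 : Real.log (δ0 - ℓ/2) ≥ Real.log (δ0 - s0) :=
      Real.log_le_log (by linarith) (by linarith)
    have hsub : δ0 - s0 = δ0/(1+b) := by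
      rw [hs0def, eq_div_iff hb1.ne']; field_simp; ring
    have hlogsub : Real.log (δ0 - s0) = Real.log δ0 - Real.log (1+b) := by
      rw [hsub, Real.log_div hδ0.ne' hb1.ne']
    nlinarith
  · rw [P, if_neg h]
    push_neg at h
    have hK : (1:ℝ) ≤ (1+b)/2 := by linarith
    have hKu : Real.log (1 + ((1+b)/2) * (d/δ)) ≤ ((1+b)/2) * Real.log (1 + d/δ) := by
      have hbern := one_add_mul_self_le_rpow_one_add (s := d/δ) (by linarith) hK
      calc Real.log (1 + ((1+b)/2) * (d/δ))
          ≤ Real.log ((1 + d/δ) ^ ((1+b)/2)) := Real.log_le_log (by nlinarith) hbern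
        _ = ((1+b)/2) * Real.log (1 + d/δ) := Real.log_rpow (by linarith) _
    have hX : (ℓ/2)/s0 ≤ ((1+b)/2) * (d/δ) := by
      have e : (ℓ/2)/s0 = ℓ*(1+b)/(2*(b*δ0)) := by
        rw [hs0def]; field_simp
      have e2 : ((1+b)/2) * (d/δ) = ((1+b)*d)/(2*δ) := by ring
      rw [e, e2, div_le_div_iff₀ (by positivity) (by positivity)]
      nlinarith [mul_le_mul hld hδδ0 hδ.le (mul_nonneg hb0.le hd.le)]
    have hXpos : 0 < (ℓ/2)/s0 := by positivity
    have hlogX : Real.log (ℓ/2) - Real.log s0 ≤ ((1+b)/2) * Real.log (1 + d/δ) := by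
      have e : Real.log (ℓ/2) - Real.log s0 = Real.log ((ℓ/2)/s0) :=
        (Real.log_div (by positivity) hs0pos.ne').symm
      rw [e]
      refine le_trans (Real.log_le_log hXpos (le_trans hX (by nlinarith))) hKu
    rw [← hs0def]
    nlinarith [mul_le_mul_of_nonneg_left hlogX hb0.le,
      mul_nonneg (mul_nonneg hb0.le (by linarith : (0:ℝ) ≤ b - 1)) hlog0]

lemma total2 (hδx : 0 < δx) (hδy : 0 < δy) (hb : 1 ≤ b) (hδ : 0 < δ)
    (hδ1 : δ ≤ δx) (hδ2 : δ ≤ δy) (hd : 0 < d) (hl0 : 0 < ℓ) (hld : ℓ ≤ b*d)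
    (hcase : δ ≤ b*d) :
    Phi2 δx δy b ℓ ℓ - Phi2 δx δy b ℓ 0 ≤ 4*b^2*Real.log (1 + d/δ) := by
  have h1 : Phi2 δx δy b ℓ ℓ = P δx b (ℓ/2) - P δy b 0 := by
    unfold Phi2
    rw [min_eq_right (by linarith : ℓ/2 ≤ ℓ), max_eq_left (by linarith : ℓ/2 ≤ ℓ),
      sub_self]
  have h2 : Phi2 δx δy b ℓ 0 = P δx b 0 - P δy b (ℓ/2) := by
    unfold Phi2
    rw [min_eq_left (by linarith : (0:ℝ) ≤ ℓ/2), max_eq_right (by linarith : (0:ℝ) ≤ ℓ/2)]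
    have : ℓ - ℓ/2 = ℓ/2 := by ring
    rw [this]
  rw [h1, h2, P_zero hδx hb, P_zero hδy hb]
  have e1 := Pbound hδx hδ hδ1 hb hd hl0 hld hcase
  have e2 := Pbound hδy hδ hδ2 hb hd hl0 hld hcase
  linarith

/-- Case-1 potential. -/
noncomputable def Phi1 (δ ℓ s : ℝ) : ℝ := s / (δ - ℓ/2)

lemma master1 (hδx : 0 < δx) (hδy : 0 < δy) (hb : 1 ≤ b) (hl : 0 < ℓ) (hδ : 0 < δ)
    (hδ1 : δ ≤ δx) (hδ2 : δ ≤ δy) (hlδ : ℓ ≤ δ)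
    {a c D : ℝ} (ha : 0 ≤ a) (hac : a ≤ c) (hcl : c ≤ ℓ)
    (hD : ∀ s, a ≤ s → s ≤ c → Fl δx δy b ℓ s ≤ D) :
    (c - a)/D ≤ Phi1 δ ℓ c - Phi1 δ ℓ a := by
  have hc0 : 0 < δ - ℓ/2 := by linarith
  have hDc : δ - ℓ/2 ≤ D := by
    have h1 : δ - ℓ/2 ≤ max (δx - a) (δy - (ℓ - a)) := by
      rcases le_total (δx - a) (δy - (ℓ - a)) with h | h
      · rw [max_eq_right h]; linarith
      · rw [max_eq_left h]; linarith
    exact le_trans (le_trans h1 (le_max_left _ _)) (hD a le_rfl hac)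
  have h2 : (c - a)/D ≤ (c - a)/(δ - ℓ/2) :=
    div_le_div_of_nonneg_left (by linarith) hc0 hDc
  have h3 : (c - a)/(δ - ℓ/2) = Phi1 δ ℓ c - Phi1 δ ℓ a := by
    unfold Phi1; rw [div_sub_div_same]
  linarith

lemma total1 (hb : 1 ≤ b) (hδ : 0 < δ) (hd : 0 < d) (hl0 : 0 < ℓ) (hld : ℓ ≤ b*d)
    (hcase : b*d ≤ δ) :
    Phi1 δ ℓ ℓ - Phi1 δ ℓ 0 ≤ 4*b^2*Real.log (1 + d/δ) := by
  have hb0 : (0:ℝ) < b := lt_of_lt_of_le one_pos hb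
  have hlδ : ℓ ≤ δ := le_trans hld (by nlinarith)
  have hc0 : 0 < δ - ℓ/2 := by linarith
  have hu : (0:ℝ) < d/δ := by positivity
  have h1 : d/(δ+d) ≤ Real.log (1 + d/δ) := by
    have h := log_ratio (one_pos) (by linarith : (1:ℝ) ≤ 1 + d/δ)
    rw [Real.log_one] at h
    have e : (1 + d/δ - 1)/(1 + d/δ) = d/(δ+d) := by
      field_simp
      ring
    rw [e] at h
    linarith
  have hdδ : d ≤ δ := by nlinarith
  have h2 : ℓ/(δ - ℓ/2) ≤ 4*b^2*(d/(δ+d)) := by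
    have e2 : 4*b^2*(d/(δ+d)) = (4*b^2*d)/(δ+d) := by ring
    rw [e2, div_le_div_iff₀ hc0 (by linarith : (0:ℝ) < δ + d)]
    have t1 : ℓ*δ ≤ b*d*δ := mul_le_mul_of_nonneg_right hld hδ.le
    have t2 : ℓ*d ≤ b*d*d := mul_le_mul_of_nonneg_right hld hd.le
    have t3 : b^2*d*ℓ ≤ b^2*d*(b*d) := mul_le_mul_of_nonneg_left hld (by positivity)
    have t4 : b^2*d*(b*d) ≤ b^2*d*δ := mul_le_mul_of_nonneg_left hcase (by positivity)
    have t5 : b*d*δ ≤ b^2*d*δ := by nlinarith [mul_nonneg (mul_nonneg hb0.le hd.le) hδ.le]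
    have t6 : b*d*d ≤ b*d*δ := mul_le_mul_of_nonneg_left hdδ (by positivity)
    nlinarith [t1, t2, t3, t4, t5, t6]
  have h3 : Phi1 δ ℓ ℓ - Phi1 δ ℓ 0 = ℓ/(δ - ℓ/2) := by
    unfold Phi1; rw [div_sub_div_same]; ring_nf
  rw [h3]
  calc ℓ/(δ - ℓ/2) ≤ 4*b^2*(d/(δ+d)) := h2
    _ ≤ 4*b^2*Real.log (1 + d/δ) :=
        mul_le_mul_of_nonneg_left h1 (by positivity)
end
section Variation
variable {X : Type*} [MetricSpace X]

lemma two_valued_sum_le (f : ℝ → X) {w : ℕ → ℝ} (hw : Monotone w) {a c : ℝ} (hac : a ≤ c)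
    (n : ℕ) (hval : ∀ i, i ≤ n → w i = a ∨ w i = c) :
    ∑ i ∈ Finset.range n, edist (f (w (i+1))) (f (w i)) ≤ edist (f c) (f a) := by
  have key : ∀ m, m ≤ n →
      ∑ i ∈ Finset.range m, edist (f (w (i+1))) (f (w i)) ≤ edist (f (w m)) (f (w 0)) := by
    intro m
    induction m with
    | zero => intro _; simp
    | succ k ih =>
      intro hk
      rw [Finset.sum_range_succ]
      rcases hval k (by omega) with h | h
      · -- w k = a
        have h0 : w 0 = w k := by
          rcases hval 0 (by omega) with h0 | h0
          · rw [h0, h]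
          · have h1 := hw (Nat.zero_le k)
            rw [h0, h] at h1 ⊢
            linarith
        have e0 : edist (f (w k)) (f (w 0)) = 0 := by rw [h0, edist_self]
        have hs : ∑ i ∈ Finset.range k, edist (f (w (i+1))) (f (w i)) = 0 :=
          le_antisymm (by rw [← e0]; exact ih (by omega)) (zero_le)
        rw [hs, zero_add, h0]
      · -- w k = c
        have h2 : w (k+1) = w k := by
          rcases hval (k+1) hk with h' | h'
          · have h1 := hw (Nat.le_succ k)
            rw [h', h] at h1 ⊢
            linarith
          · rw [h', h]
        rw [h2, edist_self, add_zero, ← h2]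
        exact le_trans (ih (by omega)) (by rw [h2])
  refine le_trans (key n le_rfl) ?_
  rcases hval n le_rfl with hn | hn <;> rcases hval 0 (Nat.zero_le n) with h0 | h0
  · rw [hn, h0, edist_self]; exact zero_le
  · have h1 := hw (Nat.zero_le n)
    rw [hn, h0] at h1
    have : a = c := le_antisymm hac h1
    rw [hn, h0, this, edist_self]
  · rw [hn, h0]
  · rw [hn, h0, edist_self]; exact zero_le

lemma Icc_add_Icc' (f : ℝ → X) {a b c : ℝ} (hab : a ≤ b) (hbc : b ≤ c) :
    eVariationOn f (Icc a b) + eVariationOn f (Icc b c) = eVariationOn f (Icc a c) := by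
  have h := eVariationOn.Icc_add_Icc f (s := Icc a c) hab hbc ⟨hab, hbc⟩
  rwa [Set.inter_eq_self_of_subset_right (Icc_subset_Icc le_rfl hbc),
    Set.inter_eq_self_of_subset_right (Icc_subset_Icc hab le_rfl),
    Set.inter_eq_self_of_subset_right (Icc_subset_Icc le_rfl le_rfl)] at h

/-- Right continuity of the variation: one can find `t₁ > t₀` with small variation
on `[t₀, t₁]`. -/
lemma exists_right_small {γ : ℝ → X} {t₀ t₂ : ℝ} (ht : t₀ < t₂)
    (hcont : ContinuousWithinAt γ (Icc t₀ t₂) t₀)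
    (hfin : eVariationOn γ (Icc t₀ t₂) ≠ ⊤) {ε : ℝ} (hε : 0 < ε) :
    ∃ t₁, t₀ < t₁ ∧ t₁ ≤ t₂ ∧ eVariationOn γ (Icc t₀ t₁) ≤ ENNReal.ofReal ε := by
  classical
  set W := eVariationOn γ (Icc t₀ t₂) with hW
  by_cases hW0 : W = 0
  · have h0' : eVariationOn γ (Icc t₀ t₂) = 0 := hW0
    exact ⟨t₂, ht, le_rfl, by rw [h0']; exact zero_le⟩
  have hε2 : (0:ℝ) < ε/2 := by linarith
  have hlt : W - ENNReal.ofReal (ε/2) < W :=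
    ENNReal.sub_lt_self hfin hW0 (ENNReal.ofReal_pos.mpr hε2).ne'
  rw [hW, eVariationOn, lt_iSup_iff] at hlt
  obtain ⟨⟨n, u, hu, us⟩, hS⟩ := hlt
  simp only at hS
  set S := ∑ i ∈ Finset.range n, edist (γ (u (i+1))) (γ (u i)) with hSdef
  -- continuity data
  obtain ⟨η, hη, hηball⟩ : ∃ η > 0, ∀ {v : ℝ}, v ∈ Icc t₀ t₂ → dist v t₀ < η →
      dist (γ v) (γ t₀) < ε/2 := Metric.tendsto_nhdsWithin_nhds.mp hcont (ε/2) hε2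
  by_cases hex : ∃ j, j ≤ n ∧ t₀ < u j
  · set j := Nat.find hex with hjdef
    obtain ⟨hjn, hjpos⟩ := Nat.find_spec hex
    have hpts : ∀ i, u i = t₀ ∨ u j ≤ u i := by
      intro i
      rcases le_or_gt (u i) t₀ with h | h
      · exact Or.inl (le_antisymm h (us i).1)
      · right
        rcases le_or_gt j i with h2 | h2
        · exact hu h2
        · exact absurd ⟨by omega, h⟩ (Nat.find_min hex h2)
    set t₁ := min (t₀ + η/2) ((t₀ + u j)/2) with ht₁def
    have h1 : t₀ < t₁ := lt_min (by linarith) (by linarith)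
    have h2 : t₁ < u j := lt_of_le_of_lt (min_le_right _ _) (by linarith)
    have h3 : t₁ ≤ t₂ := le_trans h2.le (us j).2
    have hdist : edist (γ t₁) (γ t₀) ≤ ENNReal.ofReal (ε/2) := by
      refine le_of_lt (edist_lt_ofReal.mpr (hηball ⟨h1.le, h3⟩ ?_))
      rw [Real.dist_eq, abs_of_pos (by linarith)]
      have := min_le_left (t₀ + η/2) ((t₀ + u j)/2)
      linarith [le_of_eq ht₁def]
    refine ⟨t₁, h1, h3, ?_⟩
    -- compare sums
    have step1 : ∀ i, edist (γ (u (i+1))) (γ (u i)) ≤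
        edist (γ (max (u (i+1)) t₁)) (γ (max (u i) t₁)) +
        edist (γ (min (u (i+1)) t₁)) (γ (min (u i) t₁)) := by
      intro i
      rcases le_total (u (i+1)) t₁ with hb' | hb'
      · have ha' : u i ≤ t₁ := le_trans (hu (Nat.le_succ i)) hb'
        rw [max_eq_right hb', max_eq_right ha', edist_self, min_eq_left hb', min_eq_left ha',
          zero_add]
      · rcases le_total (u i) t₁ with ha' | ha'
        · rw [max_eq_left hb', max_eq_right ha', min_eq_right hb', min_eq_left ha']
          exact edist_triangle _ _ _
        · rw [max_eq_left hb', max_eq_left ha', min_eq_right hb', min_eq_right ha',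
            edist_self, add_zero]
    have step2 : ∑ i ∈ Finset.range n, edist (γ (max (u (i+1)) t₁)) (γ (max (u i) t₁))
        ≤ eVariationOn γ (Icc t₁ t₂) := by
      refine eVariationOn.sum_le (f := γ) (n := n) (fun p q hpq => max_le_max (hu hpq) le_rfl) ?_
      intro i
      exact ⟨le_max_right _ _, max_le (us i).2 h3⟩
    have step3 : ∑ i ∈ Finset.range n, edist (γ (min (u (i+1)) t₁)) (γ (min (u i) t₁))
        ≤ edist (γ t₁) (γ t₀) := by
      refine two_valued_sum_le γ (fun p q hpq => min_le_min (hu hpq) le_rfl) h1.le n ?_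
      intro i _
      rcases hpts i with h | h
      · left; rw [h]; exact min_eq_left h1.le
      · right; exact min_eq_right (le_trans h2.le h)
    have hsum : S ≤ eVariationOn γ (Icc t₁ t₂) + edist (γ t₁) (γ t₀) := by
      calc S ≤ ∑ i ∈ Finset.range n,
            (edist (γ (max (u (i+1)) t₁)) (γ (max (u i) t₁)) +
             edist (γ (min (u (i+1)) t₁)) (γ (min (u i) t₁))) :=
          Finset.sum_le_sum (fun i _ => step1 i)
        _ = _ + _ := Finset.sum_add_distrib
        _ ≤ _ := add_le_add step2 step3
    -- additivity and cancellation
    have hadd : eVariationOn γ (Icc t₀ t₁) + eVariationOn γ (Icc t₁ t₂) = W :=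
      Icc_add_Icc' γ h1.le h3
    have hfin2 : eVariationOn γ (Icc t₁ t₂) ≠ ⊤ := by
      intro h
      rw [h, add_top] at hadd
      exact hfin hadd.symm
    have hWle : W ≤ S + ENNReal.ofReal (ε/2) := tsub_le_iff_right.mp hS.le
    have hfinal : eVariationOn γ (Icc t₀ t₁) + eVariationOn γ (Icc t₁ t₂)
        ≤ eVariationOn γ (Icc t₁ t₂) + (edist (γ t₁) (γ t₀) + ENNReal.ofReal (ε/2)) := by
      rw [hadd]
      calc W ≤ S + ENNReal.ofReal (ε/2) := hWle
        _ ≤ (eVariationOn γ (Icc t₁ t₂) + edist (γ t₁) (γ t₀)) + ENNReal.ofReal (ε/2) :=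
            add_le_add_left hsum _
        _ = _ := by ring
    have hcancel : eVariationOn γ (Icc t₀ t₁) ≤ edist (γ t₁) (γ t₀) + ENNReal.ofReal (ε/2) := by
      rw [add_comm (eVariationOn γ (Icc t₀ t₁)) (eVariationOn γ (Icc t₁ t₂))] at hfinal
      exact ENNReal.le_of_add_le_add_left hfin2 hfinal
    calc eVariationOn γ (Icc t₀ t₁) ≤ edist (γ t₁) (γ t₀) + ENNReal.ofReal (ε/2) := hcancel
      _ ≤ ENNReal.ofReal (ε/2) + ENNReal.ofReal (ε/2) := add_le_add_left hdist _
      _ = ENNReal.ofReal ε := by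
          rw [← ENNReal.ofReal_add hε2.le hε2.le]; norm_num
  · -- no partition point exceeds t₀ : S = 0
    push_neg at hex
    have hS0 : S = 0 := by
      rw [hSdef]
      refine Finset.sum_eq_zero (fun i hi => ?_)
      have hi' : i < n := Finset.mem_range.mp hi
      have e1 : u i = t₀ := le_antisymm (hex i (by omega)) (us i).1
      have e2 : u (i+1) = t₀ := le_antisymm (hex (i+1) (by omega)) (us (i+1)).1
      rw [e1, e2, edist_self]
    have hWle : W ≤ S + ENNReal.ofReal (ε/2) := tsub_le_iff_right.mp hS.le
    rw [hS0, zero_add] at hWle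
    exact ⟨t₂, ht, le_rfl,
      le_trans hWle (ENNReal.ofReal_le_ofReal (by linarith))⟩
end Variation

section Variation2
variable {X : Type*} [MetricSpace X]

/-- Left continuity of the variation. -/
lemma exists_left_small {γ : ℝ → X} {tL t₀ : ℝ} (ht : tL < t₀)
    (hcont : ContinuousWithinAt γ (Icc tL t₀) t₀)
    (hfin : eVariationOn γ (Icc tL t₀) ≠ ⊤) {ε : ℝ} (hε : 0 < ε) :
    ∃ t₁, tL ≤ t₁ ∧ t₁ < t₀ ∧ eVariationOn γ (Icc t₁ t₀) ≤ ENNReal.ofReal ε := by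
  classical
  set W := eVariationOn γ (Icc tL t₀) with hW
  by_cases hW0 : W = 0
  · have h0' : eVariationOn γ (Icc tL t₀) = 0 := hW0
    exact ⟨tL, le_rfl, ht, by rw [h0']; exact zero_le⟩
  have hε2 : (0:ℝ) < ε/2 := by linarith
  have hlt : W - ENNReal.ofReal (ε/2) < W :=
    ENNReal.sub_lt_self hfin hW0 (ENNReal.ofReal_pos.mpr hε2).ne'
  rw [hW, eVariationOn, lt_iSup_iff] at hlt
  obtain ⟨⟨n, u, hu, us⟩, hS⟩ := hlt
  simp only at hS
  set S := ∑ i ∈ Finset.range n, edist (γ (u (i+1))) (γ (u i)) with hSdef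
  obtain ⟨η, hη, hηball⟩ : ∃ η > 0, ∀ {v : ℝ}, v ∈ Icc tL t₀ → dist v t₀ < η →
      dist (γ v) (γ t₀) < ε/2 := Metric.tendsto_nhdsWithin_nhds.mp hcont (ε/2) hε2
  by_cases hex : ∃ j, j ≤ n ∧ u j < t₀
  · obtain ⟨j0, hj0n, hj0⟩ := hex
    set j := Nat.findGreatest (fun i => u i < t₀) n with hjdef
    have hjP : u j < t₀ := by
      have h := Nat.findGreatest_spec (P := fun i => u i < t₀) hj0n hj0
      simpa [hjdef] using h
    have hjn : j ≤ n := Nat.findGreatest_le n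
    have hpts : ∀ i, i ≤ n → u i = t₀ ∨ u i ≤ u j := by
      intro i hin
      rcases le_or_gt t₀ (u i) with h | h
      · exact Or.inl (le_antisymm (us i).2 h)
      · right
        rcases le_or_gt i j with h2 | h2
        · exact hu h2
        · exact absurd h (Nat.findGreatest_is_greatest h2 hin)
    set t₁ := max (t₀ - η/2) ((u j + t₀)/2) with ht₁def
    have huj1 : tL ≤ u j := (us j).1
    have h1 : t₁ < t₀ := max_lt (by linarith) (by linarith)
    have h2 : u j < t₁ := lt_of_lt_of_le (by linarith) (le_max_right _ _)
    have h3 : tL ≤ t₁ := le_trans (by linarith) (le_max_right _ _)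
    have hdist : edist (γ t₀) (γ t₁) ≤ ENNReal.ofReal (ε/2) := by
      rw [edist_comm]
      refine le_of_lt (edist_lt_ofReal.mpr (hηball ⟨h3, h1.le⟩ ?_))
      rw [Real.dist_eq, abs_of_nonpos (by linarith)]
      have := le_max_left (t₀ - η/2) ((u j + t₀)/2)
      linarith
    refine ⟨t₁, h3, h1, ?_⟩
    have step1 : ∀ i, edist (γ (u (i+1))) (γ (u i)) ≤
        edist (γ (min (u (i+1)) t₁)) (γ (min (u i) t₁)) +
        edist (γ (max (u (i+1)) t₁)) (γ (max (u i) t₁)) := by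
      intro i
      rcases le_total (u (i+1)) t₁ with hb' | hb'
      · have ha' : u i ≤ t₁ := le_trans (hu (Nat.le_succ i)) hb'
        rw [min_eq_left hb', min_eq_left ha', max_eq_right hb', max_eq_right ha',
          edist_self, add_zero]
      · rcases le_total (u i) t₁ with ha' | ha'
        · rw [min_eq_right hb', min_eq_left ha', max_eq_left hb', max_eq_right ha']
          exact le_trans (edist_triangle _ (γ t₁) _) (le_of_eq (add_comm _ _))
        · rw [min_eq_right hb', min_eq_right ha', max_eq_left hb', max_eq_left ha',
            edist_self, zero_add]
    have step2 : ∑ i ∈ Finset.range n, edist (γ (min (u (i+1)) t₁)) (γ (min (u i) t₁))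
        ≤ eVariationOn γ (Icc tL t₁) := by
      refine eVariationOn.sum_le (f := γ) (n := n) (fun p q hpq => min_le_min (hu hpq) le_rfl) ?_
      intro i
      exact ⟨le_min (us i).1 h3, min_le_right _ _⟩
    have step3 : ∑ i ∈ Finset.range n, edist (γ (max (u (i+1)) t₁)) (γ (max (u i) t₁))
        ≤ edist (γ t₀) (γ t₁) := by
      refine two_valued_sum_le γ (fun p q hpq => max_le_max (hu hpq) le_rfl) h1.le n ?_
      intro i hin
      rcases hpts i hin with h | h
      · right; rw [h]; exact max_eq_left h1.le
      · left; exact max_eq_right (le_trans h h2.le)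
    have hsum : S ≤ eVariationOn γ (Icc tL t₁) + edist (γ t₀) (γ t₁) := by
      calc S ≤ ∑ i ∈ Finset.range n,
            (edist (γ (min (u (i+1)) t₁)) (γ (min (u i) t₁)) +
             edist (γ (max (u (i+1)) t₁)) (γ (max (u i) t₁))) :=
          Finset.sum_le_sum (fun i _ => step1 i)
        _ = _ + _ := Finset.sum_add_distrib
        _ ≤ _ := add_le_add step2 step3
    have hadd : eVariationOn γ (Icc tL t₁) + eVariationOn γ (Icc t₁ t₀) = W :=
      Icc_add_Icc' γ h3 h1.le
    have hfin2 : eVariationOn γ (Icc tL t₁) ≠ ⊤ := by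
      intro h
      rw [h, top_add] at hadd
      exact hfin hadd.symm
    have hWle : W ≤ S + ENNReal.ofReal (ε/2) := tsub_le_iff_right.mp hS.le
    have hfinal : eVariationOn γ (Icc tL t₁) + eVariationOn γ (Icc t₁ t₀)
        ≤ eVariationOn γ (Icc tL t₁) + (edist (γ t₀) (γ t₁) + ENNReal.ofReal (ε/2)) := by
      rw [hadd]
      calc W ≤ S + ENNReal.ofReal (ε/2) := hWle
        _ ≤ (eVariationOn γ (Icc tL t₁) + edist (γ t₀) (γ t₁)) + ENNReal.ofReal (ε/2) :=
            add_le_add_left hsum _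
        _ = _ := by ring
    have hcancel : eVariationOn γ (Icc t₁ t₀) ≤ edist (γ t₀) (γ t₁) + ENNReal.ofReal (ε/2) :=
      ENNReal.le_of_add_le_add_left hfin2 hfinal
    calc eVariationOn γ (Icc t₁ t₀) ≤ edist (γ t₀) (γ t₁) + ENNReal.ofReal (ε/2) := hcancel
      _ ≤ ENNReal.ofReal (ε/2) + ENNReal.ofReal (ε/2) := add_le_add_left hdist _
      _ = ENNReal.ofReal ε := by
          rw [← ENNReal.ofReal_add hε2.le hε2.le]; norm_num
  · push_neg at hex
    have hS0 : S = 0 := by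
      rw [hSdef]
      refine Finset.sum_eq_zero (fun i hi => ?_)
      have hi' : i < n := Finset.mem_range.mp hi
      have e1 : u i = t₀ := le_antisymm (us i).2 (hex i (by omega))
      have e2 : u (i+1) = t₀ := le_antisymm (us (i+1)).2 (hex (i+1) (by omega))
      rw [e1, e2, edist_self]
    have hWle : W ≤ S + ENNReal.ofReal (ε/2) := tsub_le_iff_right.mp hS.le
    rw [hS0, zero_add] at hWle
    exact ⟨tL, le_rfl, ht, le_trans hWle (ENNReal.ofReal_le_ofReal (by linarith))⟩
end Variation2
section Reparam
variable {X : Type*} [MetricSpace X]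

lemma exists_reparam {γ : ℝ → X} (hcont : ContinuousOn γ (Icc 0 1))
    (hfin : eVariationOn γ (Icc 0 1) ≠ ⊤) :
    ∃ g : ℝ → X, g 0 = γ 0 ∧ g 1 = γ 1 ∧
      (∀ s t : ℝ, s ∈ Icc (0:ℝ) 1 → t ∈ Icc (0:ℝ) 1 → s ≤ t →
        edist (g s) (g t) ≤
          ENNReal.ofReal ((t - s) * (eVariationOn γ (Icc 0 1)).toReal)) ∧
      (∀ t ∈ Icc (0:ℝ) 1, ∃ u ∈ Icc (0:ℝ) 1, g t = γ u ∧
        (eVariationOn γ (Icc 0 u)).toReal = t * (eVariationOn γ (Icc 0 1)).toReal ∧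
        (eVariationOn γ (Icc u 1)).toReal
          = (1-t) * (eVariationOn γ (Icc 0 1)).toReal) := by
  classical
  set ℓ := (eVariationOn γ (Icc 0 1)).toReal with hldef
  have hl0 : 0 ≤ ℓ := ENNReal.toReal_nonneg
  set L : ℝ → ℝ := fun u => (eVariationOn γ (Icc 0 u)).toReal with hLdef
  have hfin' : ∀ a c : ℝ, 0 ≤ a → c ≤ 1 → eVariationOn γ (Icc a c) ≠ ⊤ := by
    intro a c ha hc
    exact ne_top_of_le_ne_top hfin (eVariationOn.mono γ (Icc_subset_Icc ha hc))
  have Ladd : ∀ a c : ℝ, 0 ≤ a → a ≤ c → c ≤ 1 →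
      L c = L a + (eVariationOn γ (Icc a c)).toReal := by
    intro a c ha hac hc
    have h2 := Icc_add_Icc' γ ha hac
    rw [hLdef]
    simp only
    rw [← h2, ENNReal.toReal_add (hfin' 0 a le_rfl (le_trans hac hc)) (hfin' a c ha hc)]
  have hL1 : L 1 = ℓ := rfl
  have hL0 : L 0 = 0 := by
    rw [hLdef]
    simp only
    rw [Set.Icc_self, eVariationOn.subsingleton γ subsingleton_singleton]
    rfl
  have hvar_eq : ∀ a c : ℝ, 0 ≤ a → a ≤ c → c ≤ 1 →
      eVariationOn γ (Icc a c) = ENNReal.ofReal (L c - L a) := by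
    intro a c ha hac hc
    have h := Ladd a c ha hac hc
    rw [show L c - L a = (eVariationOn γ (Icc a c)).toReal by linarith,
      ENNReal.ofReal_toReal (hfin' a c ha hc)]
  -- the time-change
  set S : ℝ → Set ℝ := fun t => {u | u ∈ Icc (0:ℝ) 1 ∧ t*ℓ ≤ L u} with hSdef
  set τ : ℝ → ℝ := fun t => sInf (S t) with hτdef
  have hSmem : ∀ t, t ≤ 1 → 1 ∈ S t := by
    intro t ht
    refine ⟨⟨zero_le_one, le_rfl⟩, ?_⟩
    rw [hL1]
    nlinarith
  have hSbdd : ∀ t, BddBelow (S t) := by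
    intro t
    exact ⟨0, fun u hu => hu.1.1⟩
  have hτmem : ∀ t, t ∈ Icc (0:ℝ) 1 → τ t ∈ Icc (0:ℝ) 1 := by
    intro t ht
    constructor
    · exact le_csInf ⟨1, hSmem t ht.2⟩ (fun u hu => hu.1.1)
    · exact csInf_le (hSbdd t) (hSmem t ht.2)
  have claim1 : ∀ t, t ∈ Icc (0:ℝ) 1 → t*ℓ ≤ L (τ t) := by
    intro t ht
    obtain ⟨hτ0, hτ1⟩ := hτmem t ht
    rcases eq_or_lt_of_le hτ1 with heq | hlt
    · rw [heq, hL1]; nlinarith [ht.2]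
    · by_contra hgt
      push_neg at hgt
      set ε := (t*ℓ - L (τ t))/2 with hεdef
      have hε : 0 < ε := by rw [hεdef]; linarith
      obtain ⟨t₁, ht₁a, ht₁b, ht₁var⟩ := exists_right_small hlt
        ((hcont (τ t) ⟨hτ0, hτ1⟩).mono (Icc_subset_Icc hτ0 le_rfl))
        (hfin' (τ t) 1 hτ0 le_rfl) hε
      obtain ⟨u, huS, hu1⟩ := exists_lt_of_csInf_lt ⟨1, hSmem t ht.2⟩
        (show sInf (S t) < t₁ from ht₁a)
      have huτ : τ t ≤ u := csInf_le (hSbdd t) huS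
      have hLu : L u ≤ L (τ t) + ε := by
        have h1 := Ladd (τ t) u hτ0 huτ huS.1.2
        have h2 : eVariationOn γ (Icc (τ t) u) ≤ ENNReal.ofReal ε :=
          le_trans (eVariationOn.mono γ (Icc_subset_Icc le_rfl hu1.le)) ht₁var
        have h3 : (eVariationOn γ (Icc (τ t) u)).toReal ≤ ε :=
          ENNReal.toReal_le_of_le_ofReal hε.le h2
        linarith
      have := huS.2
      rw [hεdef] at hLu
      linarith
  have claim2 : ∀ t, t ∈ Icc (0:ℝ) 1 → L (τ t) ≤ t*ℓ := by
    intro t ht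
    obtain ⟨hτ0, hτ1⟩ := hτmem t ht
    rcases eq_or_lt_of_le hτ0 with heq | hlt
    · rw [← heq, hL0]; exact mul_nonneg ht.1 hl0
    · by_contra hgt
      push_neg at hgt
      set ε := (L (τ t) - t*ℓ)/2 with hεdef
      have hε : 0 < ε := by rw [hεdef]; linarith
      obtain ⟨t₁, ht₁a, ht₁b, ht₁var⟩ := exists_left_small hlt
        ((hcont (τ t) ⟨hτ0, hτ1⟩).mono (Icc_subset_Icc le_rfl hτ1))
        (hfin' 0 (τ t) le_rfl hτ1) hε
      set u := (t₁ + τ t)/2 with hudef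
      have hu1 : t₁ < u := by rw [hudef]; linarith
      have hu2 : u < τ t := by rw [hudef]; linarith
      have huI : u ∈ Icc (0:ℝ) 1 := ⟨by linarith, by linarith⟩
      have hunotS : u ∉ S t := fun hmem => absurd (csInf_le (hSbdd t) hmem) (not_le.mpr hu2)
      have hLu : L u < t*ℓ := by
        by_contra h
        push_neg at h
        exact hunotS ⟨huI, h⟩
      have h1 := Ladd u (τ t) huI.1 hu2.le hτ1
      have h2 : eVariationOn γ (Icc u (τ t)) ≤ ENNReal.ofReal ε :=
        le_trans (eVariationOn.mono γ (Icc_subset_Icc hu1.le le_rfl)) ht₁var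
      have h3 : (eVariationOn γ (Icc u (τ t))).toReal ≤ ε :=
        ENNReal.toReal_le_of_le_ofReal hε.le h2
      rw [hεdef] at h3
      linarith
  have key : ∀ t, t ∈ Icc (0:ℝ) 1 → L (τ t) = t*ℓ :=
    fun t ht => le_antisymm (claim2 t ht) (claim1 t ht)
  -- the reparametrized curve
  refine ⟨γ ∘ τ, ?_, ?_, ?_, ?_⟩
  · -- g 0 = γ 0
    have h1 : eVariationOn γ (Icc 0 (τ 0)) = 0 := by
      rw [hvar_eq 0 (τ 0) le_rfl (hτmem 0 ⟨le_rfl, zero_le_one⟩).1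
        (hτmem 0 ⟨le_rfl, zero_le_one⟩).2, hL0,
        key 0 ⟨le_rfl, zero_le_one⟩]
      norm_num
    have h2 := eVariationOn.edist_le γ
      (show (0:ℝ) ∈ Icc 0 (τ 0) from ⟨le_rfl, (hτmem 0 ⟨le_rfl, zero_le_one⟩).1⟩)
      (show τ 0 ∈ Icc 0 (τ 0) from ⟨(hτmem 0 ⟨le_rfl, zero_le_one⟩).1, le_rfl⟩)
    rw [h1] at h2
    have := le_antisymm h2 (zero_le)
    simp only [Function.comp_apply]
    exact (edist_eq_zero.mp this).symm
  · -- g 1 = γ 1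
    have hm := hτmem 1 ⟨zero_le_one, le_rfl⟩
    have h1 : eVariationOn γ (Icc (τ 1) 1) = 0 := by
      rw [hvar_eq (τ 1) 1 hm.1 hm.2 le_rfl, hL1, key 1 ⟨zero_le_one, le_rfl⟩]
      norm_num
    have h2 := eVariationOn.edist_le γ
      (show τ 1 ∈ Icc (τ 1) 1 from ⟨le_rfl, hm.2⟩)
      (show (1:ℝ) ∈ Icc (τ 1) 1 from ⟨hm.2, le_rfl⟩)
    rw [h1] at h2
    have := le_antisymm h2 (zero_le)
    simp only [Function.comp_apply]
    exact edist_eq_zero.mp this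
  · -- Lipschitz
    intro s t hs ht hst
    have hτs := hτmem s hs
    have hτt := hτmem t ht
    have hττ : τ s ≤ τ t := by
      refine csInf_le_csInf (hSbdd s) ⟨1, hSmem t ht.2⟩ ?_
      intro u hu
      exact ⟨hu.1, le_trans (by nlinarith [hu.2]) hu.2⟩
    have h1 := eVariationOn.edist_le γ
      (show τ s ∈ Icc (τ s) (τ t) from ⟨le_rfl, hττ⟩)
      (show τ t ∈ Icc (τ s) (τ t) from ⟨hττ, le_rfl⟩)
    have h2 : eVariationOn γ (Icc (τ s) (τ t)) = ENNReal.ofReal ((t-s)*ℓ) := by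
      rw [hvar_eq (τ s) (τ t) hτs.1 hττ hτt.2, key s hs, key t ht]
      ring_nf
    simp only [Function.comp_apply]
    rw [edist_comm] at h1
    calc edist (γ (τ s)) (γ (τ t)) ≤ eVariationOn γ (Icc (τ s) (τ t)) := by
          rw [edist_comm]; exact h1
      _ = ENNReal.ofReal ((t-s)*ℓ) := h2
  · -- pointwise arclength data
    intro t ht
    refine ⟨τ t, hτmem t ht, rfl, key t ht, ?_⟩
    have hm := hτmem t ht
    have h1 := Ladd (τ t) 1 hm.1 hm.2 le_rfl
    rw [hL1, key t ht] at h1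
    linarith
end Reparam

end QHAux
end AuxiliaryLemmas

/-- upper bound for the quasihyperbolic distance in a uniform domain. -/
theorem qhDist_le_of_uniform {X : Type u} [MetricSpace X]
    (hX : IsRectifiablyConnectedSpace X)
    (b : ℝ) (G : Set X) (hG : IsProperDomain G) (hGu : IsUniformDomain G b)
    (x y : X) (hx : x ∈ G) (hy : y ∈ G) :
    qhDist G x y ≤
      ENNReal.ofReal (4 * b ^ 2 *
        Real.log (1 + dist x y / min (bdist G x) (bdist G y))) := by
  classical
  obtain ⟨hGopen, hGconn, hGne⟩ := hG
  have hGc : Gᶜ.Nonempty := Set.nonempty_compl.mpr hGne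
  have hGcc : IsClosed Gᶜ := hGopen.isClosed_compl
  have hbd_pos : ∀ z ∈ G, 0 < bdist G z := fun z hz =>
    (hGcc.notMem_iff_infDist_pos hGc).mp (fun h => h hz)
  have hbd_mem : ∀ z : X, 0 < bdist G z → z ∈ G := by
    intro z hz
    by_contra h
    have h' : z ∈ Gᶜ := h
    have h0 : bdist G z = 0 := Metric.infDist_zero_of_mem h'
    rw [h0] at hz
    exact lt_irrefl 0 hz
  have hδx : 0 < bdist G x := hbd_pos x hx
  have hδy : 0 < bdist G y := hbd_pos y hy
  set δx := bdist G x with hδxdef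
  set δy := bdist G y with hδydef
  set δ := min δx δy with hδdef
  have hδ : 0 < δ := lt_min hδx hδy
  rcases eq_or_ne x y with rfl | hxy
  · -- trivial case `x = y`: the constant curve has zero quasihyperbolic length
    have hmem : (fun _ : ℝ => x) ∈ {γ : ℝ → X | IsCurveIn G γ ∧ γ 0 = x ∧ γ 1 = x} :=
      ⟨⟨continuousOn_const, fun t _ => hx⟩, rfl, rfl⟩
    refine le_trans (iInf₂_le _ hmem) ?_
    have h0 : qhLength G (fun _ : ℝ => x) (Set.Icc 0 1) ≤ 0 := by
      unfold qhLength
      exact iSup_le fun p => le_of_eq (Finset.sum_eq_zero fun i _ => by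
        simp [edist_self])
    exact le_trans h0 (zero_le)
  · -- main case
    set d := dist x y with hddef
    have hd : 0 < d := dist_pos.mpr hxy
    obtain ⟨γ, ⟨hγc, hγm⟩, hγ0, hγ1, hcone, hlen⟩ := hGu x hx y hy
    set V := eVariationOn γ (Set.Icc 0 1) with hVdef
    have hVfin : V ≠ ⊤ := ne_top_of_le_ne_top ENNReal.ofReal_ne_top hlen
    set ℓ := V.toReal with hldef
    have hVlb : ENNReal.ofReal d ≤ V := by
      have h := eVariationOn.edist_le γ
        (show (0:ℝ) ∈ Set.Icc (0:ℝ) 1 from ⟨le_rfl, zero_le_one⟩)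
        (show (1:ℝ) ∈ Set.Icc (0:ℝ) 1 from ⟨zero_le_one, le_rfl⟩)
      rw [hγ0, hγ1, edist_dist] at h
      exact h
    have hbd0 : 0 ≤ b * d := by
      by_contra h
      push_neg at h
      have h2 : ENNReal.ofReal d ≤ 0 := by
        refine le_trans (le_trans hVlb hlen) ?_
        rw [ENNReal.ofReal_eq_zero.mpr h.le]
      rw [nonpos_iff_eq_zero, ENNReal.ofReal_eq_zero] at h2
      linarith
    have hdbd : d ≤ b * d := by
      have h := ENNReal.toReal_le_of_le_ofReal hbd0 (le_trans hVlb hlen)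
      rwa [ENNReal.toReal_ofReal hd.le] at h
    have hb : 1 ≤ b := by nlinarith
    have hb0 : (0:ℝ) < b := lt_of_lt_of_le one_pos hb
    have hℓbd : ℓ ≤ b * d := ENNReal.toReal_le_of_le_ofReal hbd0 hlen
    have hℓd : d ≤ ℓ := by
      have h := ENNReal.toReal_mono hVfin hVlb
      rwa [ENNReal.toReal_ofReal hd.le] at h
    have hl : 0 < ℓ := lt_of_lt_of_le hd hℓd
    have hfin' : ∀ a c : ℝ, 0 ≤ a → c ≤ 1 → eVariationOn γ (Set.Icc a c) ≠ ⊤ :=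
      fun a c ha hc => ne_top_of_le_ne_top hVfin
        (eVariationOn.mono γ (Set.Icc_subset_Icc ha hc))
    -- reparametrize the uniform arc by (scaled) arclength
    obtain ⟨g, hg0, hg1, hglip, hgpt⟩ := QHAux.exists_reparam hγc hVfin
    rw [hγ0] at hg0
    rw [hγ1] at hg1
    -- pointwise lower bound on the boundary distance along the curve
    have hFb : ∀ t ∈ Set.Icc (0:ℝ) 1, QHAux.Fl δx δy b ℓ (t*ℓ) ≤ bdist G (g t) := by
      intro t ht
      obtain ⟨u, huI, hgu, hLu, hRu⟩ := hgpt t ht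
      have hfin0u : eVariationOn γ (Set.Icc 0 u) ≠ ⊤ := hfin' 0 u le_rfl huI.2
      have hfinu1 : eVariationOn γ (Set.Icc u 1) ≠ ⊤ := hfin' u 1 huI.1 le_rfl
      have hx_dist : dist x (γ u) ≤ t*ℓ := by
        have h := eVariationOn.edist_le γ
          (show u ∈ Set.Icc (0:ℝ) u from ⟨huI.1, le_rfl⟩)
          (show (0:ℝ) ∈ Set.Icc (0:ℝ) u from ⟨le_rfl, huI.1⟩)
        have h2 := ENNReal.toReal_mono hfin0u h
        rw [← dist_edist, hLu] at h2
        rwa [hγ0, dist_comm] at h2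
      have hy_dist : dist y (γ u) ≤ ℓ - t*ℓ := by
        have h := eVariationOn.edist_le γ
          (show (1:ℝ) ∈ Set.Icc u (1:ℝ) from ⟨huI.2, le_rfl⟩)
          (show u ∈ Set.Icc u (1:ℝ) from ⟨le_rfl, huI.2⟩)
        have h2 := ENNReal.toReal_mono hfinu1 h
        rw [← dist_edist, hRu, hγ1] at h2
        calc dist y (γ u) ≤ (1-t)*ℓ := h2
          _ = ℓ - t*ℓ := by ring
      have hbb : ∀ z : X, Metric.infDist z Gᶜ = bdist G z := fun z => rfl
      have h1 : δx - t*ℓ ≤ bdist G (γ u) := by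
        have hid := Metric.infDist_le_infDist_add_dist (x := x) (y := γ u) (s := Gᶜ)
        rw [hbb, hbb, ← hδxdef] at hid
        linarith [hx_dist]
      have h2 : δy - (ℓ - t*ℓ) ≤ bdist G (γ u) := by
        have hid := Metric.infDist_le_infDist_add_dist (x := y) (y := γ u) (s := Gᶜ)
        rw [hbb, hbb, ← hδydef] at hid
        linarith [hy_dist]
      have h3 : min (t*ℓ) (ℓ - t*ℓ) / b ≤ bdist G (γ u) := by
        have hc := hcone u huI
        have hbz : 0 ≤ b * bdist G (γ u) :=
          mul_nonneg hb0.le Metric.infDist_nonneg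
        have he1 : eVariationOn γ (Set.Icc 0 u) = ENNReal.ofReal (t*ℓ) := by
          rw [← ENNReal.ofReal_toReal hfin0u, hLu]
        have he2 : eVariationOn γ (Set.Icc u 1) = ENNReal.ofReal (ℓ - t*ℓ) := by
          rw [← ENNReal.ofReal_toReal hfinu1, hRu]
          congr 1
          ring
        rw [he1, he2] at hc
        have hkey : min (t*ℓ) (ℓ - t*ℓ) ≤ b * bdist G (γ u) := by
          rcases le_total (t*ℓ) (ℓ - t*ℓ) with hmm | hmm
          · rw [min_eq_left hmm]
            have he3 : min (ENNReal.ofReal (t*ℓ)) (ENNReal.ofReal (ℓ - t*ℓ))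
                = ENNReal.ofReal (t*ℓ) := min_eq_left (ENNReal.ofReal_le_ofReal hmm)
            rw [he3] at hc
            exact (ENNReal.ofReal_le_ofReal_iff hbz).mp hc
          · rw [min_eq_right hmm]
            have he3 : min (ENNReal.ofReal (t*ℓ)) (ENNReal.ofReal (ℓ - t*ℓ))
                = ENNReal.ofReal (ℓ - t*ℓ) := min_eq_right (ENNReal.ofReal_le_ofReal hmm)
            rw [he3] at hc
            exact (ENNReal.ofReal_le_ofReal_iff hbz).mp hc
        rw [div_le_iff₀ hb0]
        exact hkey.trans_eq (mul_comm _ _)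
      rw [hgu]
      exact max_le (max_le h1 h2) h3
    -- the reparametrized curve is a curve in G
    have hgmaps : Set.MapsTo g (Set.Icc 0 1) G := by
      intro t ht
      refine hbd_mem _ (lt_of_lt_of_le ?_ (hFb t ht))
      refine QHAux.Fl_pos hδx hδy hb (mul_nonneg ht.1 hl.le) ?_
      calc t * ℓ ≤ 1 * ℓ := mul_le_mul_of_nonneg_right ht.2 hl.le
        _ = ℓ := one_mul ℓ
    have hgcont : ContinuousOn g (Set.Icc 0 1) := by
      refine LipschitzOnWith.continuousOn (K := Real.toNNReal ℓ) ?_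
      intro s hs t ht
      have hcoe : (↑(Real.toNNReal ℓ) : ℝ≥0∞) = ENNReal.ofReal ℓ := rfl
      rcases le_total s t with h | h
      · refine le_trans (hglip s t hs ht h) ?_
        rw [hcoe, edist_dist, Real.dist_eq, ← ENNReal.ofReal_mul hl.le]
        refine ENNReal.ofReal_le_ofReal ?_
        rw [abs_of_nonpos (by linarith : s - t ≤ 0)]
        nlinarith
      · rw [edist_comm]
        refine le_trans (hglip t s ht hs h) ?_
        rw [hcoe, edist_dist, Real.dist_eq, ← ENNReal.ofReal_mul hl.le]
        refine ENNReal.ofReal_le_ofReal ?_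
        rw [abs_of_nonneg (by linarith : 0 ≤ s - t)]
        nlinarith
    -- select the potential function according to the two cases
    obtain ⟨Φ, hmaster, htotal⟩ :
        ∃ Φ : ℝ → ℝ, (∀ a c D : ℝ, 0 ≤ a → a ≤ c → c ≤ ℓ →
          (∀ s, a ≤ s → s ≤ c → QHAux.Fl δx δy b ℓ s ≤ D) → (c-a)/D ≤ Φ c - Φ a) ∧
          Φ ℓ - Φ 0 ≤ 4 * b ^ 2 * Real.log (1 + d / δ) := by
      rcases le_total (b*d) δ with hc | hc
      · refine ⟨QHAux.Phi1 δ ℓ, ?_, ?_⟩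
        · intro a c D ha hac hcl hD
          exact QHAux.master1 hδx hδy hb hl hδ (min_le_left _ _) (min_le_right _ _)
            (le_trans hℓbd hc) ha hac hcl hD
        · have h := QHAux.total1 hb hδ hd hl hℓbd hc
          calc QHAux.Phi1 δ ℓ ℓ - QHAux.Phi1 δ ℓ 0 ≤ 4*b^2*Real.log (1 + d/δ) := h
            _ = 4 * b ^ 2 * Real.log (1 + d / δ) := by ring
      · refine ⟨QHAux.Phi2 δx δy b ℓ, ?_, ?_⟩
        · intro a c D ha hac hcl hD
          exact QHAux.master2 hδx hδy hb hl ha hac hcl hD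
        · have h := QHAux.total2 hδx hδy hb hδ (min_le_left _ _) (min_le_right _ _)
            hd hl hℓbd hc
          calc QHAux.Phi2 δx δy b ℓ ℓ - QHAux.Phi2 δx δy b ℓ 0
              ≤ 4*b^2*Real.log (1 + d/δ) := h
            _ = 4 * b ^ 2 * Real.log (1 + d / δ) := by ring
    have hΦmono : ∀ a c : ℝ, 0 ≤ a → a ≤ c → c ≤ ℓ → Φ a ≤ Φ c := by
      intro a c ha hac hcl
      have hDBpos : 0 < max (max δx δy) ℓ :=
        lt_of_lt_of_le hδx (le_trans (le_max_left _ _) (le_max_left _ _))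
      have h := hmaster a c (max (max δx δy) ℓ) ha hac hcl (fun s hs1 hs2 =>
        QHAux.Fl_le hδx hδy hb hl.le (le_trans ha hs1) (le_trans hs2 hcl))
      have h2 : 0 ≤ (c - a)/(max (max δx δy) ℓ) := div_nonneg (by linarith) hDBpos.le
      linarith
    -- bound the quasihyperbolic length of g
    have hmem : g ∈ {γ' : ℝ → X | IsCurveIn G γ' ∧ γ' 0 = x ∧ γ' 1 = y} :=
      ⟨⟨hgcont, hgmaps⟩, hg0, hg1⟩
    refine le_trans (iInf₂_le g hmem) ?_
    unfold qhLength
    refine iSup_le ?_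
    rintro ⟨n, u, hu, hus⟩
    show ∑ i ∈ Finset.range n, edist (g (u (i+1))) (g (u i)) /
        ENNReal.ofReal (⨆ t ∈ Set.Icc (u i) (u (i+1)), bdist G (g t))
        ≤ ENNReal.ofReal (4 * b ^ 2 * Real.log (1 + d / δ))
    have hstep : ∀ i : ℕ, edist (g (u (i+1))) (g (u i)) /
        ENNReal.ofReal (⨆ t ∈ Set.Icc (u i) (u (i+1)), bdist G (g t))
        ≤ ENNReal.ofReal (Φ (u (i+1) * ℓ) - Φ (u i * ℓ)) := by
      intro i
      have hui := hus i
      have hui1 := hus (i+1)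
      have huii : u i ≤ u (i+1) := hu (Nat.le_succ i)
      have hq0 : 0 ≤ u i * ℓ := mul_nonneg hui.1 hl.le
      have hq1 : u i * ℓ ≤ u (i+1) * ℓ := mul_le_mul_of_nonneg_right huii hl.le
      have hq2 : u (i+1) * ℓ ≤ ℓ := by
        calc u (i+1) * ℓ ≤ 1 * ℓ := mul_le_mul_of_nonneg_right hui1.2 hl.le
          _ = ℓ := one_mul ℓ
      have hbddA : BddAbove (Set.range fun t =>
          ⨆ _ : t ∈ Set.Icc (u i) (u (i+1)), bdist G (g t)) := by
        refine ⟨δx + ℓ, ?_⟩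
        rintro v ⟨t, rfl⟩
        dsimp only
        by_cases h : t ∈ Set.Icc (u i) (u (i+1))
        · rw [ciSup_pos h]
          have htI : t ∈ Set.Icc (0:ℝ) 1 := ⟨le_trans hui.1 h.1, le_trans h.2 hui1.2⟩
          have hdist : dist (g t) x ≤ ℓ := by
            have h2 := hglip 0 t ⟨le_rfl, zero_le_one⟩ htI htI.1
            rw [hg0] at h2
            have hq : (0:ℝ) ≤ t * ℓ := mul_nonneg htI.1 hl.le
            have hq2 : t * ℓ ≤ ℓ := by
              calc t * ℓ ≤ 1 * ℓ := mul_le_mul_of_nonneg_right htI.2 hl.le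
                _ = ℓ := one_mul ℓ
            have h3 : dist x (g t) ≤ (t - 0) * ℓ := by
              rw [dist_edist]
              exact ENNReal.toReal_le_of_le_ofReal (by nlinarith) h2
            rw [dist_comm]
            nlinarith
          have hid := Metric.infDist_le_infDist_add_dist (x := g t) (y := x) (s := Gᶜ)
          have hbb : ∀ z : X, Metric.infDist z Gᶜ = bdist G z := fun z => rfl
          rw [hbb, hbb, ← hδxdef] at hid
          linarith
        · haveI : IsEmpty (t ∈ Set.Icc (u i) (u (i+1)) : Prop) := ⟨h⟩
          rw [Real.iSup_of_isEmpty]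
          positivity
      set Dr := ⨆ t ∈ Set.Icc (u i) (u (i+1)), bdist G (g t) with hDr
      have hDrb : ∀ t ∈ Set.Icc (u i) (u (i+1)), bdist G (g t) ≤ Dr := by
        intro t ht
        have h := le_ciSup hbddA t
        rwa [ciSup_pos ht] at h
      have hD1 : ∀ s, u i * ℓ ≤ s → s ≤ u (i+1) * ℓ → QHAux.Fl δx δy b ℓ s ≤ Dr := by
        intro s hs1 hs2
        have ht1 : u i ≤ s/ℓ := by rw [le_div_iff₀ hl]; exact hs1
        have ht2 : s/ℓ ≤ u (i+1) := by rw [div_le_iff₀ hl]; exact hs2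
        have htI : s/ℓ ∈ Set.Icc (0:ℝ) 1 := ⟨le_trans hui.1 ht1, le_trans ht2 hui1.2⟩
        have h := hFb (s/ℓ) htI
        rw [div_mul_cancel₀ _ hl.ne'] at h
        exact le_trans h (hDrb _ ⟨ht1, ht2⟩)
      have hDpos : 0 < Dr := by
        refine lt_of_lt_of_le (QHAux.Fl_pos hδx hδy hb hq0 ?_)
          (hD1 (u i * ℓ) le_rfl hq1)
        linarith
      have hnum : edist (g (u (i+1))) (g (u i)) ≤
          ENNReal.ofReal ((u (i+1) - u i) * ℓ) := by
        rw [edist_comm]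
        exact hglip (u i) (u (i+1)) hui hui1 huii
      calc edist (g (u (i+1))) (g (u i)) / ENNReal.ofReal Dr
          ≤ ENNReal.ofReal ((u (i+1) - u i) * ℓ) / ENNReal.ofReal Dr :=
            ENNReal.div_le_div_right hnum _
        _ = ENNReal.ofReal (((u (i+1) - u i) * ℓ) / Dr) :=
            (ENNReal.ofReal_div_of_pos hDpos).symm
        _ ≤ ENNReal.ofReal (Φ (u (i+1) * ℓ) - Φ (u i * ℓ)) := by
            refine ENNReal.ofReal_le_ofReal ?_
            have h := hmaster (u i * ℓ) (u (i+1) * ℓ) Dr hq0 hq1 hq2 hD1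
            calc ((u (i+1) - u i) * ℓ) / Dr = (u (i+1) * ℓ - u i * ℓ)/Dr := by ring_nf
              _ ≤ _ := h
    have humul : ∀ j : ℕ, u j * ℓ ≤ ℓ := by
      intro j
      calc u j * ℓ ≤ 1 * ℓ := mul_le_mul_of_nonneg_right (hus j).2 hl.le
        _ = ℓ := one_mul ℓ
    have hmono' : ∀ i : ℕ, Φ (u i * ℓ) ≤ Φ (u (i+1) * ℓ) := fun i =>
      hΦmono _ _ (mul_nonneg (hus i).1 hl.le)
        (mul_le_mul_of_nonneg_right (hu (Nat.le_succ i)) hl.le) (humul (i+1))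
    calc ∑ i ∈ Finset.range n, edist (g (u (i+1))) (g (u i)) /
          ENNReal.ofReal (⨆ t ∈ Set.Icc (u i) (u (i+1)), bdist G (g t))
        ≤ ∑ i ∈ Finset.range n, ENNReal.ofReal (Φ (u (i+1) * ℓ) - Φ (u i * ℓ)) :=
          Finset.sum_le_sum (fun i _ => hstep i)
      _ = ENNReal.ofReal (∑ i ∈ Finset.range n, (Φ (u (i+1) * ℓ) - Φ (u i * ℓ))) :=
          (ENNReal.ofReal_sum_of_nonneg (fun i _ => by linarith [hmono' i])).symm
      _ = ENNReal.ofReal (Φ (u n * ℓ) - Φ (u 0 * ℓ)) := by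
          rw [Finset.sum_range_sub (fun i => Φ (u i * ℓ))]
      _ ≤ ENNReal.ofReal (4 * b ^ 2 * Real.log (1 + d / δ)) := by
          refine ENNReal.ofReal_le_ofReal ?_
          have h1 : Φ (u n * ℓ) ≤ Φ ℓ :=
            hΦmono _ _ (mul_nonneg (hus n).1 hl.le) (humul n) le_rfl
          have h2 : Φ 0 ≤ Φ (u 0 * ℓ) :=
            hΦmono 0 _ le_rfl (mul_nonneg (hus 0).1 hl.le) (humul 0)
          linarith
end
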